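/- arXiv:2306.15920 — 8 statements merged into one kernel-verified Lean document; each statement's English description precedes it below -/
import Mathlib

section
/- Let n = 2 and let G = {g_1, …, g_m} be the set of goods. Let M be a mechanism defined on all profiles (v_1, v_2) of normalized, monotone valuations, and suppose M has incentive ratio at most α for some α ≥ 1, i.e., for every such profile, every agent i ∈ {1, 2}, and every normalized monotone misreport v_i', we have v_i(M_i with v_i replaced by v_i') ≤ α · v_i(M_i(v_1, v_2)). Then every good g ∈ G is α-controlled by exactly one of the two agents with respect to M. -/
/-- A valuation: normalized and monotone set function on goods. -/
def IsValuation {m : ℕ} (v : Finset (Fin m) → ℝ) : Prop :=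
  v ∅ = 0 ∧ ∀ S T : Finset (Fin m), S ⊆ T → v S ≤ v T

def AdditiveVal {m : ℕ} (v : Finset (Fin m) → ℝ) : Prop :=
  ∀ S T : Finset (Fin m), Disjoint S T → v (S ∪ T) = v S + v T

def SubadditiveVal {m : ℕ} (v : Finset (Fin m) → ℝ) : Prop :=
  ∀ S T : Finset (Fin m), v (S ∪ T) ≤ v S + v T

def CancelableVal {m : ℕ} (v : Finset (Fin m) → ℝ) : Prop :=
  ∀ S T : Finset (Fin m), ∀ g : Fin m, g ∉ S ∪ T → v (insert g S) > v (insert g T) → v S > v T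

def SubmodularVal {m : ℕ} (v : Finset (Fin m) → ℝ) : Prop :=
  ∀ S T : Finset (Fin m), S ⊆ T → ∀ g : Fin m, g ∉ T →
    v (insert g T) - v T ≤ v (insert g S) - v S

def MultiplicativeVal {m : ℕ} (v : Finset (Fin m) → ℝ) : Prop :=
  (∀ g : Fin m, 1 ≤ v {g}) ∧ ∀ S : Finset (Fin m), S.Nonempty → v S = ∏ g ∈ S, v {g}

def XOSVal {m : ℕ} (v : Finset (Fin m) → ℝ) : Prop :=
  ∃ (k : ℕ) (f : Fin (k + 1) → Finset (Fin m) → ℝ),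
    (∀ j, AdditiveVal (f j)) ∧
    ∀ S : Finset (Fin m), (∃ j, v S = f j S) ∧ ∀ j, f j S ≤ v S

def IsAllocation {n m : ℕ} (A : Fin n → Finset (Fin m)) : Prop :=
  (∀ i j : Fin n, i ≠ j → Disjoint (A i) (A j)) ∧ ∀ g : Fin m, ∃ i, g ∈ A i

/-- `α`-EF1. -/
def EF1 {n m : ℕ} (α : ℝ) (v : Fin n → Finset (Fin m) → ℝ) (A : Fin n → Finset (Fin m)) : Prop :=
  ∀ i j : Fin n, A j = ∅ ∨ ∃ g ∈ A j, α * v i (A j \ {g}) ≤ v i (A i)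

/-- The remaining good maximizing `f`, ties broken in favor of the smallest index. -/
noncomputable def chooseFavorite {m : ℕ} (f : Fin m → ℝ) (S : Finset (Fin m))
    (h : S.Nonempty) : Fin m :=
  (S.filter fun g => ∀ h' ∈ S, f h' ≤ f g).min' (by
    obtain ⟨b, hb, hmax⟩ := S.exists_max_image f h
    exact ⟨b, Finset.mem_filter.mpr ⟨hb, hmax⟩⟩)

/-- The state (bundles, remaining goods) of round-robin after `k` stages, where at stage
`k+1` the agent `k % n` picks a remaining good maximizing `score i (current bundle of i)`,
ties broken towards the smallest index. -/
noncomputable def rrState {n m : ℕ} (score : Fin n → Finset (Fin m) → Fin m → ℝ) :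
    ℕ → (Fin n → Finset (Fin m)) × Finset (Fin m)
  | 0 => (fun _ => (∅ : Finset (Fin m)), Finset.univ)
  | k + 1 =>
      let st := rrState score k
      if hn : 0 < n then
        if h : st.2.Nonempty then
          let i : Fin n := ⟨k % n, Nat.mod_lt k hn⟩
          let g := chooseFavorite (score i (st.1 i)) st.2 h
          (Function.update st.1 i (insert g (st.1 i)), st.2.erase g)
        else st
      else st

/-- Mechanism 1: Round-Robin where each agent picks a remaining good of largest value. -/
noncomputable def roundRobin1 {n m : ℕ} (v : Fin n → Finset (Fin m) → ℝ) :
    Fin n → Finset (Fin m) :=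
  (rrState (fun i _ g => v i {g}) m).1

/-- Mechanism 2: Round-Robin where each agent picks a remaining good of largest
marginal value with respect to his current bundle. -/
noncomputable def roundRobin2 {n m : ℕ} (v : Fin n → Finset (Fin m) → ℝ) :
    Fin n → Finset (Fin m) :=
  (rrState (fun i A g => v i (insert g A) - v i A) m).1

noncomputable def expTransform {m : ℕ} (δ : ℝ) (v : Finset (Fin m) → ℝ) :
    Finset (Fin m) → ℝ :=
  fun S => if S = ∅ then 0 else Real.exp (δ * v S)

def addVal {m : ℕ} (w : Fin m → ℝ) : Finset (Fin m) → ℝ := fun S => ∑ g ∈ S, w g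

def Envies {n m : ℕ} (v : Fin n → Finset (Fin m) → ℝ) (A : Fin n → Finset (Fin m))
    (i j : Fin n) : Prop :=
  v i (A i) < v i (A j)

def Unenvied {n m : ℕ} (v : Fin n → Finset (Fin m) → ℝ) (A : Fin n → Finset (Fin m))
    (j : Fin n) : Prop :=
  ∀ i : Fin n, ¬ Envies v A i j

def EnvyCycleStep {n m : ℕ} (v : Fin n → Finset (Fin m) → ℝ)
    (A A' : Fin n → Finset (Fin m)) : Prop :=
  ∃ σ : Equiv.Perm (Fin n), σ.IsCycle ∧ (∀ i, σ i ≠ i → Envies v A i (σ i)) ∧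
    ∀ i, A' i = A (σ i)

def HasEnvyCycle {n m : ℕ} (v : Fin n → Finset (Fin m) → ℝ)
    (A : Fin n → Finset (Fin m)) : Prop :=
  ∃ σ : Equiv.Perm (Fin n), σ.IsCycle ∧ ∀ i, σ i ≠ i → Envies v A i (σ i)

def Eliminated {n m : ℕ} (v : Fin n → Finset (Fin m) → ℝ)
    (A B : Fin n → Finset (Fin m)) : Prop :=
  Relation.ReflTransGen (EnvyCycleStep v) A B ∧ ¬ HasEnvyCycle v B

inductive EGP {n m : ℕ} (v : Fin n → Finset (Fin m) → ℝ) :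
    ℕ → (Fin n → Finset (Fin m)) → Prop
  | init : EGP v 0 (fun _ => ∅)
  | step {k : ℕ} (hk : k < m) {A C : Fin n → Finset (Fin m)} (j : Fin n) :
      EGP v k A → Unenvied v A j → (∀ j' : Fin n, Unenvied v A j' → j ≤ j') →
      Eliminated v (Function.update A j (insert ⟨k, hk⟩ (A j))) C →
      EGP v (k + 1) C

inductive EGP2 {n m : ℕ} (v : Fin n → Finset (Fin m) → ℝ) :
    ℕ → (Fin n → Finset (Fin m)) → Finset (Fin m) → Prop
  | init : EGP2 v 0 (fun _ => ∅) Finset.univ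
  | step {k : ℕ} {A C : Fin n → Finset (Fin m)} {S : Finset (Fin m)} (j : Fin n) (g : Fin m) :
      EGP2 v k A S → Unenvied v A j → (∀ j' : Fin n, Unenvied v A j' → j ≤ j') →
      g ∈ S → (∀ h ∈ S, v j {h} ≤ v j {g}) → (∀ h ∈ S, v j {g} ≤ v j {h} → g ≤ h) →
      Eliminated v (Function.update A j (insert g (A j))) C →
      EGP2 v (k + 1) C (S.erase g)

/-- Agent with valuation `v` `α`-strongly desires good `g`. -/
def StronglyDesires {m : ℕ} (α : ℝ) (v : Finset (Fin m) → ℝ) (g : Fin m) : Prop :=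
  α * v (Finset.univ \ {g}) < v {g}

/-- Agent `i` `α`-controls good `g` with respect to the two-agent mechanism `M`
(defined on all profiles of normalized monotone valuations). -/
def Controls {m : ℕ} (α : ℝ)
    (M : (Fin 2 → Finset (Fin m) → ℝ) → Fin 2 → Finset (Fin m)) (i : Fin 2) (g : Fin m) :
    Prop :=
  ∀ v : Fin 2 → Finset (Fin m) → ℝ, (∀ j, IsValuation (v j)) →
    StronglyDesires α (v i) g → g ∈ M v i

/-- If a two-agent mechanism `M` on normalized monotone valuations has incentive ratio
at most `α ≥ 1`, then every good is `α`-controlled by exactly one of the two agents. -/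
theorem control_lemma {m : ℕ} (α : ℝ) (hα : 1 ≤ α)
    (M : (Fin 2 → Finset (Fin m) → ℝ) → Fin 2 → Finset (Fin m))
    (hAlloc : ∀ v : Fin 2 → Finset (Fin m) → ℝ, (∀ j, IsValuation (v j)) →
      IsAllocation (M v))
    (hIR : ∀ v : Fin 2 → Finset (Fin m) → ℝ, (∀ j, IsValuation (v j)) →
      ∀ i : Fin 2, ∀ v' : Finset (Fin m) → ℝ, IsValuation v' →
        v i (M (Function.update v i v') i) ≤ α * v i (M v i)) :
    ∀ g : Fin m, ∃! i : Fin 2, Controls α M i g := by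
  intro g
  classical
  set u : Finset (Fin m) → ℝ := (fun S => if g ∈ S then 1 else 0) with hu
  have hu_val : IsValuation u := by
    constructor
    · simp [u]
    · intro S T hST
      by_cases hg : g ∈ S
      · simp [u, hg, hST hg]
      · by_cases hg' : g ∈ T <;> simp [u, hg, hg']
  have hU_val : ∀ j : Fin 2, IsValuation ((fun _ => u) j) := fun _ => hu_val
  obtain ⟨hdisj, hcover⟩ := hAlloc (fun _ => u) hU_val
  obtain ⟨i₀, hi₀⟩ := hcover g
  have husd : StronglyDesires α u g := by
    have : g ∉ (Finset.univ \ {g} : Finset (Fin m)) := by simp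
    simp [StronglyDesires, u, this]
  have hα0 : (0:ℝ) ≤ α := le_trans zero_le_one hα
  have hctrl : Controls α M i₀ g := by
    intro v hv hsd
    by_contra hgnot
    have hw_val : ∀ j, IsValuation (Function.update v i₀ u j) := by
      intro j
      by_cases h : j = i₀
      · subst h; simpa using hu_val
      · simpa [Function.update, h] using hv j
    set w := Function.update v i₀ u with hwdef
    have h1 := hIR v hv i₀ u hu_val
    have hmono := (hv i₀).2
    have hsub : M v i₀ ⊆ Finset.univ \ {g} := by
      intro x hx
      simp only [Finset.mem_sdiff, Finset.mem_univ, Finset.mem_singleton, true_and]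
      rintro rfl; exact hgnot hx
    have h3 : v i₀ (M w i₀) < v i₀ {g} := by
      calc v i₀ (M w i₀) ≤ α * v i₀ (M v i₀) := h1
        _ ≤ α * v i₀ (Finset.univ \ {g}) :=
          mul_le_mul_of_nonneg_left (hmono _ _ hsub) hα0
        _ < v i₀ {g} := hsd
    have hgw : g ∉ M w i₀ := by
      intro h
      exact absurd (hmono {g} _ (Finset.singleton_subset_iff.mpr h)) (not_le.mpr h3)
    obtain ⟨hdisjw, hcoverw⟩ := hAlloc w hw_val
    obtain ⟨j, hj⟩ := hcoverw g
    have hne : j ≠ i₀ := by rintro rfl; exact hgw hj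
    have hUw : Function.update (fun _ => u) j (v j) = w := by
      funext k
      by_cases hk : k = j
      · subst hk
        simp [Function.update, hwdef, hne]
      · have hki : k = i₀ := by
          have hk' : k.val ≠ j.val := fun h => hk (Fin.ext h)
          have hn' : j.val ≠ i₀.val := fun h => hne (Fin.ext h)
          have b1 := k.isLt; have b2 := j.isLt; have b3 := i₀.isLt
          exact Fin.ext (by omega)
        subst hki
        simp [Function.update, hk, hwdef]
    have h4 := hIR (fun _ => u) hU_val j (v j) (hv j)
    rw [hUw] at h4
    replace h4 : u (M w j) ≤ α * u (M (fun _ => u) j) := h4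
    have hg1 : u (M w j) = 1 := by simp [u, hj]
    have hgU : g ∉ M (fun _ => u) j := fun h =>
      Finset.disjoint_left.mp (hdisj j i₀ hne) h hi₀
    have hg0 : u (M (fun _ => u) j) = 0 := by simp [u, hgU]
    rw [hg1, hg0, mul_zero] at h4
    linarith
  refine ⟨i₀, hctrl, ?_⟩
  intro k hk
  have hgk : g ∈ M (fun _ => u) k := hk (fun _ => u) hU_val husd
  by_contra hne
  exact Finset.disjoint_left.mp (hdisj k i₀ hne) hgk hi₀
end

section
/- Let (v_1, …, v_n) be a profile of additive valuations over G, let ε > 0, and let δ > 0 satisfy ln(1/ε) ≤ (δ/10) · v_i(S) for every agent i and every S ⊆ G with v_i(S) > 0. For an additive valuation v, let v^δ denote the multiplicative valuation with v^δ(∅) = 0 and v^δ(S) = exp(δ · v(S)) for every nonempty S ⊆ G. If an allocation A is ε-EF1 with respect to (v_1^δ, …, v_n^δ), then A is (9/10)-EF1 with respect to (v_1, …, v_n). -/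
/-- If the allocation `A` is ε-EF1 with respect to the exponential transforms
`v_i^δ` of an additive profile, where `ln(1/ε) ≤ (δ/10) · v_i(S)` whenever `v_i(S) > 0`,
then `A` is (9/10)-EF1 with respect to the original additive profile. -/
theorem exp_transform_ef1 {n m : ℕ} (v : Fin n → Finset (Fin m) → ℝ)
    (hv : ∀ i, IsValuation (v i) ∧ AdditiveVal (v i))
    (ε δ : ℝ) (hε : 0 < ε) (hδ : 0 < δ)
    (hcond : ∀ (i : Fin n) (S : Finset (Fin m)), 0 < v i S →
      Real.log (1 / ε) ≤ δ / 10 * v i S)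
    (A : Fin n → Finset (Fin m)) (hA : IsAllocation A)
    (hEF1 : EF1 ε (fun i => expTransform δ (v i)) A) :
    EF1 (9 / 10) v A := by
  intro i j
  rcases hEF1 i j with h | ⟨g, hg, hle⟩
  · exact Or.inl h
  · right
    refine ⟨g, hg, ?_⟩
    obtain ⟨⟨hz, hmono⟩, _⟩ := hv i
    have hnnS : 0 ≤ v i (A j \ {g}) := hz ▸ hmono ∅ _ (Finset.empty_subset _)
    have hnnB : 0 ≤ v i (A i) := hz ▸ hmono ∅ _ (Finset.empty_subset _)
    by_cases hS : v i (A j \ {g}) ≤ 0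
    · nlinarith
    push_neg at hS
    have hSne : (A j \ {g}) ≠ ∅ := by
      intro h; rw [h, hz] at hS; exact lt_irrefl 0 hS
    simp only [expTransform, hSne, if_false] at hle
    have hBne : A i ≠ ∅ := by
      intro h
      rw [h] at hle
      simp only [expTransform, if_pos rfl, if_true, eq_self_iff_true] at hle
      nlinarith [Real.exp_pos (δ * v i (A j \ {g})), mul_pos hε (Real.exp_pos (δ * v i (A j \ {g})))]
    simp only [expTransform, hBne, if_false] at hle
    have hlog : Real.log ε + δ * v i (A j \ {g}) ≤ δ * v i (A i) := by
      have h1 : Real.log (ε * Real.exp (δ * v i (A j \ {g}))) ≤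
          Real.log (Real.exp (δ * v i (A i))) :=
        Real.log_le_log (by positivity) hle
      rwa [Real.log_mul (ne_of_gt hε) (ne_of_gt (Real.exp_pos _)), Real.log_exp,
        Real.log_exp] at h1
    have hc := hcond i (A j \ {g}) hS
    rw [one_div, Real.log_inv] at hc
    nlinarith
end

section
/- Let v_1 be an additive valuation over G, let α ≥ 1, and let δ > 0 satisfy ln α ≤ (δ/10) · v_1(S) for every S ⊆ G with v_1(S) > 0. Let v_1^δ denote the multiplicative valuation with v_1^δ(∅) = 0 and v_1^δ(S) = exp(δ · v_1(S)) for every nonempty S ⊆ G. Then for all bundles B, B' ⊆ G, if v_1^δ(B') ≤ α · v_1^δ(B), then v_1(B') ≤ 1.1 · v_1(B); in particular, if v_1(B) = 0 then v_1(B') = 0. -/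
/-- For an additive valuation `v₁` and `δ > 0` with `ln α ≤ (δ/10) · v₁(S)` whenever
`v₁(S) > 0`: if `v₁^δ(B') ≤ α · v₁^δ(B)` then `v₁(B') ≤ 1.1 · v₁(B)`; in particular,
if `v₁(B) = 0` then `v₁(B') = 0`. -/
theorem exp_transform_incentive {m : ℕ} (v : Finset (Fin m) → ℝ)
    (hv : IsValuation v ∧ AdditiveVal v)
    (α δ : ℝ) (hα : 1 ≤ α) (hδ : 0 < δ)
    (hcond : ∀ S : Finset (Fin m), 0 < v S → Real.log α ≤ δ / 10 * v S)
    (B B' : Finset (Fin m))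
    (h : expTransform δ v B' ≤ α * expTransform δ v B) :
    v B' ≤ 1.1 * v B ∧ (v B = 0 → v B' = 0) := by
  obtain ⟨⟨h0, hmono⟩, -⟩ := hv
  have hB'0 : 0 ≤ v B' := by have := hmono ∅ B' (Finset.empty_subset _); linarith [h0 ▸ this]
  have hB0 : 0 ≤ v B := by have := hmono ∅ B (Finset.empty_subset _); linarith [h0 ▸ this]
  by_cases hB' : B' = ∅
  · refine ⟨?_, fun _ => by rw [hB', h0]⟩
    rw [hB', h0]; nlinarith
  · simp only [expTransform, if_neg hB'] at h
    by_cases hB : B = ∅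
    · rw [if_pos hB] at h
      nlinarith [Real.exp_pos (δ * v B')]
    · rw [if_neg hB] at h
      have hαpos : 0 < α := lt_of_lt_of_le one_pos hα
      have hlog : δ * v B' ≤ Real.log α + δ * v B := by
        have : Real.exp (δ * v B') ≤ Real.exp (Real.log α + δ * v B) := by
          rw [Real.exp_add, Real.exp_log hαpos]; exact h
        exact Real.exp_le_exp.mp this
      have hlogα : 0 ≤ Real.log α := Real.log_nonneg hα
      rcases eq_or_lt_of_le hB'0 with hz | hpos
      · exact ⟨by nlinarith, fun _ => hz.symm⟩
      · rcases eq_or_lt_of_le hB0 with hbz | hbpos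
        · have := hcond B' hpos
          exfalso; nlinarith
        · have := hcond B hbpos
          exact ⟨by nlinarith, fun habs => absurd habs (by linarith)⟩
end

section
/- Consider Round-Robin (Mechanism 1) run on a profile (v_1, …, v_n) of normalized, monotone valuations over G, and suppose agent i's true valuation v_i is subadditive and cancelable. Then for every normalized, monotone misreport v_i', the bundle agent i receives when Mechanism 1 is run on the profile with v_i replaced by v_i' has v_i-value at most 2 times the v_i-value of the bundle he receives when Mechanism 1 is run on the truthful profile. Consequently, Mechanism 1 admits an incentive ratio of at most 2 for subadditive cancelable valuations. -/
/-!
Couple the truthful run of round-robin with the run in which agent `i` misreports. The other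
agents score goods identically in both runs, so the two sets of remaining goods drift apart by
at most one good per turn of `i`; adding the at most `t` goods `i` has taken by then, at most
`2 t` goods of the misreport bundle `B'` are gone from the truthful run before `i`'s turn
number `t` (counted from `0`). Ranking `B'` by departure time from the truthful run, the good of
rank `r` is therefore still available at turn `r / 2`, where `i` truthfully takes a good of
at least its singleton value. The goods of even rank and those of odd rank thus each inject
into `i`'s truthful bundle with singleton values going up; cancelability turns each injection
into `v_i(half) ≤ v_i(A_i)`, and subadditivity adds up the two halves.
-/

open Finset

namespace CancelableVal

variable {m : ℕ} {v : Finset (Fin m) → ℝ}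

theorem insert_le_insert (hv : CancelableVal v) {S T : Finset (Fin m)} {g : Fin m}
    (hg : g ∉ S ∪ T) (h : v S ≤ v T) : v (insert g S) ≤ v (insert g T) :=
  not_lt.1 fun hlt => (hv S T g hg hlt).not_ge h

theorem insert_le_insert_of_singleton_le (hv : CancelableVal v) {g h : Fin m}
    (hle : v {g} ≤ v {h}) {T : Finset (Fin m)} (hg : g ∉ T) (hh : h ∉ T) :
    v (insert g T) ≤ v (insert h T) := by
  induction T using Finset.induction_on with
  | empty => simpa using hle
  | insert a T haT ih =>
    rw [insert_comm g, insert_comm h]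
    rw [mem_insert, not_or] at hg hh
    refine hv.insert_le_insert ?_ (ih hg.2 hh.2)
    simp only [mem_union, mem_insert, not_or]
    exact ⟨⟨Ne.symm hg.1, haT⟩, Ne.symm hh.1, haT⟩

theorem le_image (hv : CancelableVal v) {φ : Fin m → Fin m} {Y : Finset (Fin m)}
    (hφ : Set.InjOn φ Y) (hle : ∀ b ∈ Y, v {b} ≤ v {φ b}) : v Y ≤ v (Y.image φ) := by
  induction Y using Finset.strongInduction with
  | H Y ih =>
  by_cases hsub : Y ⊆ Y.image φ
  · rw [← eq_of_subset_of_card_le hsub (card_image_of_injOn hφ).le]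
  obtain ⟨a, haY, haφ⟩ := not_subset.1 hsub
  set Y₀ := Y.erase a
  have hY₀ : Y₀ ⊆ Y := erase_subset a Y
  have himage : Y.image φ = insert (φ a) (Y₀.image φ) := by
    rw [← image_insert, insert_erase haY]
  have hφa : φ a ∉ Y₀.image φ := fun h => by
    obtain ⟨b, hb, hba⟩ := mem_image.1 h
    exact (ne_of_mem_erase hb) (hφ (hY₀ hb) haY hba)
  have ha : a ∉ Y₀ ∪ Y₀.image φ := by
    rw [mem_union, not_or]
    exact ⟨notMem_erase a Y, fun h => haφ (image_subset_image hY₀ h)⟩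
  calc v Y = v (insert a Y₀) := by rw [insert_erase haY]
    _ ≤ v (insert a (Y₀.image φ)) :=
        hv.insert_le_insert ha (ih Y₀ (erase_ssubset haY) (hφ.mono hY₀)
          fun b hb => hle b (hY₀ hb))
    _ ≤ v (insert (φ a) (Y₀.image φ)) :=
        hv.insert_le_insert_of_singleton_le (hle a haY) (fun h => ha (mem_union_right _ h)) hφa
    _ = v (Y.image φ) := by rw [himage]

end CancelableVal

section Combinatorics

variable {β : Type*} [DecidableEq β]

theorem exists_injOn_lt_card_filter_le (d : β → ℕ) (B : Finset β) :
    ∃ ρ : β → ℕ, Set.InjOn ρ B ∧ ∀ b ∈ B, ρ b < #{b' ∈ B | d b' ≤ d b} := by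
  induction B using Finset.induction_on_max_value d with
  | empty => exact ⟨fun _ => 0, by simp, by simp⟩
  | insert a B haB hmax ih =>
    obtain ⟨ρ, hρ, hlt⟩ := ih
    have hlt' : ∀ b ∈ B, ρ b < #B := fun b hb => (hlt b hb).trans_le (card_filter_le _ _)
    refine ⟨Function.update ρ a #B, ?_, ?_⟩
    · rw [coe_insert, Set.injOn_insert (mem_coe.not.2 haB)]
      refine ⟨hρ.congr fun b hb => (Function.update_of_ne (ne_of_mem_of_not_mem hb haB) _ _).symm,
        ?_⟩
      rintro ⟨b, hb, hba⟩
      rw [Function.update_self, Function.update_of_ne (ne_of_mem_of_not_mem hb haB)] at hba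
      exact (hlt' b hb).ne hba
    · intro b hb
      rcases mem_insert.1 hb with rfl | hb
      · rw [Function.update_self, filter_insert, if_pos le_rfl, card_insert_of_notMem
          (fun h => haB (mem_filter.1 h).1), filter_true_of_mem hmax]
        exact Nat.lt_succ_self _
      · rw [Function.update_of_ne (ne_of_mem_of_not_mem hb haB)]
        exact (hlt b hb).trans_le (card_le_card (filter_subset_filter _ (subset_insert a B)))

theorem exists_union_injOn_of_card_sdiff_le {R : ℕ → Finset β} (hR : Antitone R) {K : ℕ}
    (hK : R K = ∅) (c : ℕ → ℕ) {B : Finset β} (hB : ∀ k, #(B \ R k) ≤ 2 * c k) :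
    ∃ (ψ : β → ℕ) (X Y : Finset β), X ∪ Y = B ∧ Set.InjOn ψ X ∧ Set.InjOn ψ Y ∧
      ∀ b ∈ B, ∀ k, c k ≤ ψ b → b ∈ R k := by
  have hleave : ∀ b, ∃ k, b ∉ R k := fun b => ⟨K, by simp [hK]⟩
  set d : β → ℕ := fun b => Nat.find (hleave b)
  have hd : ∀ b k, b ∈ R k ↔ k < d b := fun b k => by
    rw [Nat.lt_find_iff]
    exact ⟨fun h k' hk' => not_not.2 (hR hk' h), fun h => not_not.1 (h k le_rfl)⟩
  obtain ⟨ρ, hρ, hρlt⟩ := exists_injOn_lt_card_filter_le d B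
  have havail : ∀ b ∈ B, ∀ k, c k ≤ ρ b / 2 → b ∈ R k := fun b hb k hk => by
    by_contra hbk
    have hdk : d b ≤ k := not_lt.1 ((hd b k).not.1 hbk)
    have : #{b' ∈ B | d b' ≤ d b} ≤ #(B \ R k) := card_le_card fun b' hb' => by
      rw [mem_filter] at hb'
      exact mem_sdiff.2 ⟨hb'.1, by rw [hd]; omega⟩
    have := hρlt b hb
    have := hB k
    omega
  refine ⟨fun b => ρ b / 2, {b ∈ B | ρ b % 2 = 0}, {b ∈ B | ¬ρ b % 2 = 0},
    filter_union_filter_not_eq _ _, ?_, ?_, havail⟩ <;>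
  · intro a ha b hb hab
    simp only [coe_filter, Set.mem_ofPred_eq] at ha hb hab
    exact hρ ha.1 hb.1 (by omega)

end Combinatorics

theorem Antitone.eq_of_mem_of_notMem_succ {α : Type*} {R : ℕ → Finset α} (hR : Antitone R)
    {p : α} {k l : ℕ} (hk : p ∈ R k) (hk' : p ∉ R (k + 1)) (hl : p ∈ R l)
    (hl' : p ∉ R (l + 1)) : k = l := by
  by_contra hne
  rcases lt_or_gt_of_ne hne with h | h
  exacts [hk' (hR h hl), hl' (hR h hk)]

theorem Nat.count_modEq_add_mul {n i : ℕ} (hi : i < n) (t : ℕ) :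
    Nat.count (· ≡ i [MOD n]) (i + t * n) = t := by
  rw [Nat.count_modEq_card _ (i.zero_le.trans_lt hi), Nat.add_mul_mod_self_right,
    Nat.add_mul_div_right _ _ (i.zero_le.trans_lt hi), Nat.div_eq_of_lt hi, if_neg (lt_irrefl _)]
  omega

theorem Fin.ofNat_eq_iff_modEq {n k : ℕ} [NeZero n] {i : Fin n} :
    Fin.ofNat n k = i ↔ k ≡ i [MOD n] := by
  rw [Fin.ext_iff, Fin.val_ofNat, Nat.ModEq, Nat.mod_eq_of_lt i.isLt]

section EraseSdiff

variable {α : Type*} [DecidableEq α] {S T : Finset α} {a b : α}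

theorem card_erase_sdiff_erase_le_succ : #(T.erase a \ S.erase b) ≤ #(T \ S) + 1 := by
  refine (card_le_card fun x hx => ?_).trans (card_insert_le b (T \ S))
  simp only [mem_sdiff, mem_erase, mem_insert, not_and] at hx ⊢
  tauto

theorem card_erase_sdiff_erase_le (ha : a ∈ T) (hab : a ∈ S → b ∈ T → a = b) :
    #(T.erase a \ S.erase b) ≤ #(T \ S) := by
  by_cases haS : a ∈ S
  · refine card_le_card fun x hx => ?_
    simp only [mem_sdiff, mem_erase, not_and] at hx ⊢
    obtain ⟨⟨hxa, hxT⟩, hxS⟩ := hx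
    refine ⟨hxT, fun hx => hxa ?_⟩
    obtain rfl : x = b := by_contra fun hxb => hxS hxb hx
    exact (hab haS hxT).symm
  · have haTS : a ∈ T \ S := mem_sdiff.2 ⟨ha, haS⟩
    have hsub : T.erase a \ S.erase b ⊆ insert b ((T \ S).erase a) := fun x hx => by
      simp only [mem_sdiff, mem_erase, mem_insert, not_and] at hx ⊢
      tauto
    have := card_le_card hsub
    have := card_insert_le b ((T \ S).erase a)
    rw [card_erase_of_mem haTS] at this
    have := card_pos.2 ⟨a, haTS⟩
    omega

end EraseSdiff

section ChooseFavorite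

variable {m : ℕ} (φ : Fin m → ℝ)

theorem chooseFavorite_mem (S : Finset (Fin m)) (hS : S.Nonempty) : chooseFavorite φ S hS ∈ S :=
  (mem_filter.1 (min'_mem _ _)).1

theorem le_chooseFavorite {S : Finset (Fin m)} (hS : S.Nonempty) {g : Fin m} (hg : g ∈ S) :
    φ g ≤ φ (chooseFavorite φ S hS) :=
  (mem_filter.1 (min'_mem (S.filter fun g => ∀ h ∈ S, φ h ≤ φ g) _)).2 g hg

theorem chooseFavorite_eq_of_mem {S T : Finset (Fin m)} (hS : S.Nonempty) (hT : T.Nonempty)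
    (hST : chooseFavorite φ S hS ∈ T) (hTS : chooseFavorite φ T hT ∈ S) :
    chooseFavorite φ S hS = chooseFavorite φ T hT := by
  have heq := (le_chooseFavorite φ hT hST).antisymm (le_chooseFavorite φ hS hTS)
  have hmaxT : chooseFavorite φ S hS ∈ T.filter fun g => ∀ h ∈ T, φ h ≤ φ g :=
    mem_filter.2 ⟨hST, fun h hh => heq ▸ le_chooseFavorite φ hT hh⟩
  have hmaxS : chooseFavorite φ T hT ∈ S.filter fun g => ∀ h ∈ S, φ h ≤ φ g :=
    mem_filter.2 ⟨hTS, fun h hh => heq ▸ le_chooseFavorite φ hS hh⟩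
  exact (min'_le _ _ hmaxS).antisymm (min'_le _ _ hmaxT)

end ChooseFavorite

section RoundRobin

variable {n m : ℕ} (s : Fin n → Fin m → ℝ)

/-- The goods left after `k` stages of round-robin in which agent `j` picks by the fixed score
`s j`; `rrBundle s k` are the bundles at that time, so that
`roundRobin1 v = rrBundle (fun j g => v j {g}) m` by definition. -/
noncomputable def rrRemaining (k : ℕ) : Finset (Fin m) := (rrState (fun j _ => s j) k).2

noncomputable def rrBundle (k : ℕ) : Fin n → Finset (Fin m) := (rrState (fun j _ => s j) k).1

variable {s} [NeZero n] {k : ℕ}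

theorem rrState_succ_of_nonempty (h : (rrRemaining s k).Nonempty) :
    rrState (fun j _ => s j) (k + 1) =
      (Function.update (rrBundle s k) (Fin.ofNat n k)
        (insert (chooseFavorite (s (Fin.ofNat n k)) _ h) (rrBundle s k (Fin.ofNat n k))),
        (rrRemaining s k).erase (chooseFavorite (s (Fin.ofNat n k)) _ h)) := by
  rw [rrState, dif_pos (Nat.pos_of_neZero n),
    dif_pos (id h : (rrState (fun j _ => s j) k).2.Nonempty)]
  rfl

theorem rrState_succ_of_not_nonempty (h : ¬(rrRemaining s k).Nonempty) :
    rrState (fun j _ => s j) (k + 1) = rrState (fun j _ => s j) k := by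
  rw [rrState, dif_pos (Nat.pos_of_neZero n),
    dif_neg (id h : ¬(rrState (fun j _ => s j) k).2.Nonempty)]

theorem rrRemaining_succ (h : (rrRemaining s k).Nonempty) :
    rrRemaining s (k + 1) = (rrRemaining s k).erase (chooseFavorite (s (Fin.ofNat n k)) _ h) := by
  rw [rrRemaining, rrState_succ_of_nonempty h]

theorem rrBundle_succ (h : (rrRemaining s k).Nonempty) :
    rrBundle s (k + 1) =
      Function.update (rrBundle s k) (Fin.ofNat n k)
        (insert (chooseFavorite (s (Fin.ofNat n k)) _ h) (rrBundle s k (Fin.ofNat n k))) := by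
  rw [rrBundle, rrState_succ_of_nonempty h]

theorem rrRemaining_succ_of_not_nonempty (h : ¬(rrRemaining s k).Nonempty) :
    rrRemaining s (k + 1) = rrRemaining s k := by
  rw [rrRemaining, rrState_succ_of_not_nonempty h]; rfl

theorem rrBundle_succ_of_not_nonempty (h : ¬(rrRemaining s k).Nonempty) :
    rrBundle s (k + 1) = rrBundle s k := by
  rw [rrBundle, rrState_succ_of_not_nonempty h]; rfl

theorem card_rrRemaining (k : ℕ) : #(rrRemaining s k) = m - k := by
  induction k with
  | zero => simp [rrRemaining, rrState]
  | succ k ih =>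
    by_cases h : (rrRemaining s k).Nonempty
    · rw [rrRemaining_succ h, card_erase_of_mem (chooseFavorite_mem _ _ h), ih]
      omega
    · rw [rrRemaining_succ_of_not_nonempty h, ih]
      rw [not_nonempty_iff_eq_empty, ← card_eq_zero, ih] at h
      omega

theorem rrRemaining_nonempty_iff : (rrRemaining s k).Nonempty ↔ k < m := by
  rw [← card_pos, card_rrRemaining]
  omega

theorem rrRemaining_antitone : Antitone (rrRemaining s) := by
  refine antitone_nat_of_succ_le fun k => ?_
  by_cases h : (rrRemaining s k).Nonempty
  · rw [rrRemaining_succ h]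
    exact erase_subset _ _
  · rw [rrRemaining_succ_of_not_nonempty h]

theorem rrBundle_monotone (j : Fin n) : Monotone (rrBundle s · j) := by
  refine monotone_nat_of_le_succ fun k => ?_
  by_cases h : (rrRemaining s k).Nonempty
  · rw [rrBundle_succ h, Function.update_apply]
    split_ifs with hj
    · exact hj ▸ subset_insert _ _
    · exact subset_rfl
  · rw [rrBundle_succ_of_not_nonempty h]

theorem rrBundle_succ_subset (k : ℕ) (j : Fin n) :
    rrBundle s (k + 1) j ⊆ rrBundle s k j ∪ rrRemaining s k := by
  by_cases h : (rrRemaining s k).Nonempty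
  · rw [rrBundle_succ h, Function.update_apply]
    split_ifs with hj
    · subst hj
      exact insert_subset (mem_union_right _ (chooseFavorite_mem _ _ h)) subset_union_left
    · exact subset_union_left
  · rw [rrBundle_succ_of_not_nonempty h]
    exact subset_union_left

theorem rrBundle_subset_union (k k' : ℕ) (j : Fin n) :
    rrBundle s k' j ⊆ rrBundle s k j ∪ rrRemaining s k := by
  rcases le_total k' k with hk | hk
  · exact (rrBundle_monotone j hk).trans subset_union_left
  induction k', hk using Nat.le_induction with
  | base => exact subset_union_left
  | succ k' hk ih =>
    refine (rrBundle_succ_subset k' j).trans (union_subset ih ?_)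
    exact (rrRemaining_antitone hk).trans subset_union_right

theorem exists_pick_mem_rrBundle (hk : k < m) :
    ∃ p ∈ rrRemaining s k, p ∉ rrRemaining s (k + 1) ∧ p ∈ rrBundle s m (Fin.ofNat n k) ∧
      ∀ g ∈ rrRemaining s k, s (Fin.ofNat n k) g ≤ s (Fin.ofNat n k) p := by
  have h := rrRemaining_nonempty_iff (s := s).2 hk
  refine ⟨_, chooseFavorite_mem _ _ h, ?_, rrBundle_monotone _ hk ?_,
    fun g hg => le_chooseFavorite _ h hg⟩
  · rw [rrRemaining_succ h]
    exact notMem_erase _ _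
  · show _ ∈ rrBundle s (k + 1) _
    rw [rrBundle_succ h, Function.update_self]
    exact mem_insert_self _ _

theorem card_rrBundle_le_count (k : ℕ) (j : Fin n) :
    #(rrBundle s k j) ≤ Nat.count (· ≡ j [MOD n]) k := by
  induction k with
  | zero => simp [rrBundle, rrState]
  | succ k ih =>
    rw [Nat.count_succ]
    by_cases h : (rrRemaining s k).Nonempty
    · rw [rrBundle_succ h, Function.update_apply]
      split_ifs with hj hkj hkj
      · subst hj
        exact (card_insert_le _ _).trans (by omega)
      · exact absurd (Fin.ofNat_eq_iff_modEq.1 hj.symm) hkj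
      · omega
      · omega
    · rw [rrBundle_succ_of_not_nonempty h]
      omega

theorem card_rrRemaining_sdiff_le_count {s' : Fin n → Fin m → ℝ} {i : Fin n}
    (hs : ∀ j ≠ i, s' j = s j) (k : ℕ) :
    #(rrRemaining s' k \ rrRemaining s k) ≤ Nat.count (· ≡ i [MOD n]) k := by
  induction k with
  | zero => simp [rrRemaining, rrState]
  | succ k ih =>
    rw [Nat.count_succ]
    by_cases hk : k < m
    · have h := rrRemaining_nonempty_iff (s := s).2 hk
      have h' := rrRemaining_nonempty_iff (s := s').2 hk
      rw [rrRemaining_succ h, rrRemaining_succ h']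
      by_cases hi : Fin.ofNat n k = i
      · rw [if_pos (Fin.ofNat_eq_iff_modEq.1 hi)]
        exact card_erase_sdiff_erase_le_succ.trans (by omega)
      · rw [hs _ hi]
        refine (card_erase_sdiff_erase_le (chooseFavorite_mem _ _ h') fun hS hT =>
          (chooseFavorite_eq_of_mem _ h h' hT hS).symm).trans (ih.trans ?_)
        omega
    · rw [rrRemaining_succ_of_not_nonempty (mt rrRemaining_nonempty_iff.1 hk),
        rrRemaining_succ_of_not_nonempty (mt rrRemaining_nonempty_iff.1 hk)]
      omega

theorem rrRemaining_eq_empty : rrRemaining s m = ∅ :=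
  card_eq_zero.1 (by rw [card_rrRemaining, Nat.sub_self])

theorem card_rrBundle_sdiff_rrRemaining_le {s' : Fin n → Fin m → ℝ} {i : Fin n}
    (hs : ∀ j ≠ i, s' j = s j) (k k' : ℕ) :
    #(rrBundle s' k' i \ rrRemaining s k) ≤ 2 * Nat.count (· ≡ i [MOD n]) k := by
  have hsub : rrBundle s' k' i \ rrRemaining s k ⊆
      rrBundle s' k i ∪ (rrRemaining s' k \ rrRemaining s k) := fun g hg => by
    have := rrBundle_subset_union k k' i (mem_sdiff.1 hg).1
    simp only [mem_union, mem_sdiff] at this hg ⊢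
    tauto
  have h1 := card_rrBundle_le_count (s := s') k i
  have h2 := card_rrRemaining_sdiff_le_count hs k
  have h3 := (card_le_card hsub).trans (card_union_le _ _)
  omega

end RoundRobin

theorem le_roundRobin1_of_injOn {n m : ℕ} {v : Fin n → Finset (Fin m) → ℝ} {i : Fin n}
    (hmono : ∀ S T, S ⊆ T → v i S ≤ v i T) (hcanc : CancelableVal (v i))
    {X : Finset (Fin m)} {ψ : Fin m → ℕ} (hψ : Set.InjOn ψ X)
    (hX : ∀ b ∈ X, b ∈ rrRemaining (fun j g => v j {g}) (i + ψ b * n)) :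
    v i X ≤ v i (roundRobin1 v i) := by
  have : NeZero n := ⟨i.pos.ne'⟩
  have hpick : ∀ b ∈ X, ∃ p ∈ rrRemaining (fun j g => v j {g}) (i + ψ b * n),
      p ∉ rrRemaining (fun j g => v j {g}) (i + ψ b * n + 1) ∧ p ∈ roundRobin1 v i ∧
        v i {b} ≤ v i {p} := by
    intro b hb
    have hturn : Fin.ofNat n (i + ψ b * n) = i :=
      Fin.ofNat_eq_iff_modEq.2 (by simp [Nat.ModEq])
    obtain ⟨p, hp, hp', hpA, hpmax⟩ := exists_pick_mem_rrBundle (s := fun j g => v j {g})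
      (rrRemaining_nonempty_iff.1 ⟨b, hX b hb⟩)
    rw [hturn] at hpA hpmax
    exact ⟨p, hp, hp', hpA, hpmax b (hX b hb)⟩
  choose! φ hφ hφ' hφA hφle using hpick
  have hφinj : Set.InjOn φ X := fun a ha b hb hab => by
    have := rrRemaining_antitone.eq_of_mem_of_notMem_succ (hφ a ha) (hφ' a ha)
      (hab ▸ hφ b hb) (hab ▸ hφ' b hb)
    exact hψ ha hb (Nat.eq_of_mul_eq_mul_right i.pos (by omega))
  calc v i X ≤ v i (X.image φ) := hcanc.le_image hφinj hφle
    _ ≤ v i (roundRobin1 v i) := hmono _ _ (image_subset_iff.2 hφA)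

theorem roundRobin1_incentive_subadditive_cancelable_general {n m : ℕ}
    (v : Fin n → Finset (Fin m) → ℝ) (hv : ∀ j, IsValuation (v j)) (i : Fin n)
    (hsub : SubadditiveVal (v i)) (hcanc : CancelableVal (v i))
    (v' : Finset (Fin m) → ℝ) :
    v i (roundRobin1 (Function.update v i v') i) ≤ 2 * v i (roundRobin1 v i) := by
  have : NeZero n := ⟨i.pos.ne'⟩
  have hs : ∀ j ≠ i, (fun j g => Function.update v i v' j {g}) j = fun g => v j {g} :=
    fun j hj => by simp only [Function.update_of_ne hj]
  obtain ⟨ψ, X, Y, hXY, hX, hY, hψ⟩ := exists_union_injOn_of_card_sdiff_le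
    rrRemaining_antitone rrRemaining_eq_empty (Nat.count (· ≡ i [MOD n]))
    (card_rrBundle_sdiff_rrRemaining_le hs · m)
  have havail : ∀ b ∈ X ∪ Y, b ∈ rrRemaining (fun j g => v j {g}) (i + ψ b * n) :=
    fun b hb => hψ b (hXY ▸ hb) _ (Nat.count_modEq_add_mul i.isLt _).le
  have hmono := (hv i).2
  calc v i (roundRobin1 (Function.update v i v') i) = v i (X ∪ Y) := (congrArg (v i) hXY).symm
    _ ≤ v i X + v i Y := hsub X Y
    _ ≤ v i (roundRobin1 v i) + v i (roundRobin1 v i) := add_le_add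
        (le_roundRobin1_of_injOn hmono hcanc hX fun b hb => havail b (mem_union_left _ hb))
        (le_roundRobin1_of_injOn hmono hcanc hY fun b hb => havail b (mem_union_right _ hb))
    _ = 2 * v i (roundRobin1 v i) := (two_mul _).symm

/-- Round-Robin (Mechanism 1) admits an incentive ratio of at most 2 for subadditive
cancelable valuations: if agent `i`'s true valuation is subadditive and cancelable, then
for every normalized monotone misreport `v'`, the bundle agent `i` receives under the
misreport is worth at most twice the bundle he receives under truthful reporting. -/
theorem roundRobin1_incentive_subadditive_cancelable {n m : ℕ}
    (v : Fin n → Finset (Fin m) → ℝ) (hv : ∀ j, IsValuation (v j)) (i : Fin n)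
    (hsub : SubadditiveVal (v i)) (hcanc : CancelableVal (v i))
    (v' : Finset (Fin m) → ℝ) (hv' : IsValuation v') :
    v i (roundRobin1 (Function.update v i v') i) ≤ 2 * v i (roundRobin1 v i) :=
  roundRobin1_incentive_subadditive_cancelable_general v hv i hsub hcanc v'
end

section
/- Let v be a normalized, monotone, cancelable valuation over G. Let X = {x_1, …, x_k} ⊆ G and Y = {y_1, …, y_k} ⊆ G, where x_1, …, x_k are pairwise distinct and y_1, …, y_k are pairwise distinct. If v({x_j}) ≥ v({y_j}) for every j ∈ {1, …, k}, then v(X) ≥ v(Y). -/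
lemma ins_mono {m : ℕ} {v : Finset (Fin m) → ℝ} (hc : CancelableVal v)
    {S T : Finset (Fin m)} {g : Fin m} (hg : g ∉ S ∪ T) (h : v S ≤ v T) :
    v (insert g S) ≤ v (insert g T) := by
  by_contra hlt
  push_neg at hlt
  exact absurd (hc S T g hg hlt) (not_lt.mpr h)

lemma swap_lem {m : ℕ} {v : Finset (Fin m) → ℝ} (hc : CancelableVal v)
    (S : Finset (Fin m)) (a b : Fin m) (ha : a ∉ S) (hb : b ∉ S)
    (hab : v {a} ≤ v {b}) : v (insert a S) ≤ v (insert b S) := by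
  induction S using Finset.induction_on with
  | empty => simpa using hab
  | @insert s S' hs ih =>
    rcases eq_or_ne a b with rfl | hne
    · exact le_refl _
    have ha' : a ∉ S' := fun h => ha (Finset.mem_insert_of_mem h)
    have hb' : b ∉ S' := fun h => hb (Finset.mem_insert_of_mem h)
    have hsa : s ≠ a := fun h => ha (h ▸ Finset.mem_insert_self s S')
    have hsb : s ≠ b := fun h => hb (h ▸ Finset.mem_insert_self s S')
    rw [Finset.insert_comm a s S', Finset.insert_comm b s S']
    exact ins_mono hc (by simp [hsa, hsb, hs]) (ih ha' hb')

lemma image_succ {m k : ℕ} (f : Fin (k + 1) → Fin m) :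
    Finset.image f Finset.univ =
      insert (f (Fin.last k)) (Finset.image (f ∘ Fin.castSucc) Finset.univ) := by
  ext g
  simp only [Finset.mem_image, Finset.mem_insert, Finset.mem_univ, true_and,
    Function.comp_apply]
  constructor
  · rintro ⟨j, rfl⟩
    rcases Fin.eq_castSucc_or_eq_last j with ⟨i, rfl⟩ | rfl
    · exact Or.inr ⟨i, rfl⟩
    · exact Or.inl rfl
  · rintro (rfl | ⟨i, rfl⟩)
    exacts [⟨_, rfl⟩, ⟨_, rfl⟩]

lemma peel {m k : ℕ} {v : Finset (Fin m) → ℝ} (hc : CancelableVal v)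
    (x y : Fin (k + 1) → Fin m) (hx : Function.Injective x) (hy : Function.Injective y)
    (hd : v {y (Fin.last k)} ≤ v {x (Fin.last k)})
    (hyx : y (Fin.last k) ∉ Finset.image (x ∘ Fin.castSucc) Finset.univ)
    (ih : v (Finset.image (y ∘ Fin.castSucc) Finset.univ) ≤
      v (Finset.image (x ∘ Fin.castSucc) Finset.univ)) :
    v (Finset.image y Finset.univ) ≤ v (Finset.image x Finset.univ) := by
  rw [image_succ x, image_succ y]
  have hyY : y (Fin.last k) ∉ Finset.image (y ∘ Fin.castSucc) Finset.univ := by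
    simp only [Finset.mem_image, Finset.mem_univ, true_and, Function.comp_apply, not_exists]
    intro i hi
    exact absurd (hy hi) (Fin.ne_last_of_lt (Fin.castSucc_lt_last i))
  have hxX : x (Fin.last k) ∉ Finset.image (x ∘ Fin.castSucc) Finset.univ := by
    simp only [Finset.mem_image, Finset.mem_univ, true_and, Function.comp_apply, not_exists]
    intro i hi
    exact absurd (hx hi) (Fin.ne_last_of_lt (Fin.castSucc_lt_last i))
  calc v (insert (y (Fin.last k)) (Finset.image (y ∘ Fin.castSucc) Finset.univ))
      ≤ v (insert (y (Fin.last k)) (Finset.image (x ∘ Fin.castSucc) Finset.univ)) :=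
        ins_mono hc (by simp [hyY, hyx]) ih
    _ ≤ v (insert (x (Fin.last k)) (Finset.image (x ∘ Fin.castSucc) Finset.univ)) :=
        swap_lem hc _ _ _ hyx hxX hd

lemma image_comp_perm {m k : ℕ} (f : Fin k → Fin m) (σ : Equiv.Perm (Fin k)) :
    Finset.image (f ∘ σ) Finset.univ = Finset.image f Finset.univ := by
  ext g
  simp only [Finset.mem_image, Finset.mem_univ, true_and, Function.comp_apply]
  exact ⟨fun ⟨j, hj⟩ => ⟨σ j, hj⟩, fun ⟨j, hj⟩ => ⟨σ.symm j, by simpa using hj⟩⟩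

/-- For a normalized monotone cancelable valuation `v`: if `X = {x_1, …, x_k}` and
`Y = {y_1, …, y_k}` (with distinct `x_j`'s and distinct `y_j`'s) satisfy
`v({x_j}) ≥ v({y_j})` for every `j`, then `v(X) ≥ v(Y)`. -/
theorem cancelable_pointwise_dominance {m k : ℕ} (v : Finset (Fin m) → ℝ)
    (hv : IsValuation v) (hc : CancelableVal v)
    (x y : Fin k → Fin m) (hx : Function.Injective x) (hy : Function.Injective y)
    (h : ∀ j : Fin k, v {y j} ≤ v {x j}) :
    v (Finset.image y Finset.univ) ≤ v (Finset.image x Finset.univ) := by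
  induction k with
  | zero => simp [hv.1]
  | succ k ih =>
    clear hv
    -- put an index of maximal value of `x` at the last position
    obtain ⟨j₀, -, hmax⟩ :=
      Finset.exists_max_image Finset.univ (fun j => v {x j}) Finset.univ_nonempty
    set σ : Equiv.Perm (Fin (k + 1)) := Equiv.swap j₀ (Fin.last k) with hσ
    set x₁ : Fin (k + 1) → Fin m := x ∘ σ with hx₁def
    set y₁ : Fin (k + 1) → Fin m := y ∘ σ with hy₁def
    have hx₁ : Function.Injective x₁ := hx.comp σ.injective
    have hy₁ : Function.Injective y₁ := hy.comp σ.injective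
    have hd₁ : ∀ j, v {y₁ j} ≤ v {x₁ j} := fun j => h (σ j)
    have hmax₁ : ∀ j, v {x₁ j} ≤ v {x₁ (Fin.last k)} := by
      intro j
      have : x₁ (Fin.last k) = x j₀ := by
        simp [hx₁def, hσ, Equiv.swap_apply_right]
      rw [this]
      exact hmax (σ j) (Finset.mem_univ _)
    rw [← image_comp_perm x σ, ← image_comp_perm y σ]
    by_cases hyX : y₁ (Fin.last k) ∈ Finset.image (x₁ ∘ Fin.castSucc) Finset.univ
    · -- `y₁ last` appears among the first `k` values of `x₁`: swap it to the last slot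
      obtain ⟨a, -, ha⟩ := Finset.mem_image.mp hyX
      set τ : Equiv.Perm (Fin (k + 1)) := Equiv.swap (Fin.castSucc a) (Fin.last k) with hτ
      set x₂ : Fin (k + 1) → Fin m := x₁ ∘ τ with hx₂def
      have hx₂ : Function.Injective x₂ := hx₁.comp τ.injective
      have hlast : x₂ (Fin.last k) = y₁ (Fin.last k) := by
        simpa [hx₂def, hτ, Equiv.swap_apply_right] using ha
      have hd₂ : ∀ j, v {y₁ j} ≤ v {x₂ j} := by
        intro j
        rcases eq_or_ne j (Fin.castSucc a) with rfl | hja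
        · have : x₂ (Fin.castSucc a) = x₁ (Fin.last k) := by
            simp [hx₂def, hτ, Equiv.swap_apply_left]
          rw [this]
          exact (hd₁ _).trans (hmax₁ _)
        rcases eq_or_ne j (Fin.last k) with rfl | hjl
        · rw [hlast]
        · have : x₂ j = x₁ j := by simp [hx₂def, hτ, Equiv.swap_apply_of_ne_of_ne hja hjl]
          rw [this]; exact hd₁ j
      rw [← image_comp_perm x₁ τ]
      refine peel hc x₂ y₁ hx₂ hy₁ (le_of_eq (by rw [hlast])) ?_ ?_
      · rw [← hlast]
        simp only [Finset.mem_image, Finset.mem_univ, true_and, Function.comp_apply,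
          not_exists]
        intro i hi
        exact absurd (hx₂ hi) (Fin.ne_last_of_lt (Fin.castSucc_lt_last i))
      · exact ih (x₂ ∘ Fin.castSucc) (y₁ ∘ Fin.castSucc)
          (hx₂.comp (Fin.castSucc_injective _)) (hy₁.comp (Fin.castSucc_injective _))
          (fun j => hd₂ (Fin.castSucc j))
    · exact peel hc x₁ y₁ hx₁ hy₁ (hd₁ _) hyX
        (ih (x₁ ∘ Fin.castSucc) (y₁ ∘ Fin.castSucc)
          (hx₁.comp (Fin.castSucc_injective _)) (hy₁.comp (Fin.castSucc_injective _))
          (fun j => hd₁ (Fin.castSucc j)))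
end

section
/- Let v be a normalized, monotone, subadditive, cancelable valuation over G, and let X, B ⊆ G. Suppose there exists a map M : X → B such that v({g}) ≤ v({M(g)}) for every g ∈ X, and |M^{-1}(b)| ≤ 2 for every b ∈ B. Then v(X) ≤ 2 · v(B). -/
lemma cancel_le_aux {m : ℕ} {v : Finset (Fin m) → ℝ} (hc : CancelableVal v)
    {S T : Finset (Fin m)} {g : Fin m} (hgS : g ∉ S) (hgT : g ∉ T)
    (h : v S ≤ v T) : v (insert g S) ≤ v (insert g T) := by
  by_contra hlt
  push_neg at hlt
  exact absurd (hc S T g (by simp [hgS, hgT]) hlt) (not_lt.mpr h)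

lemma swap_aux {m : ℕ} {v : Finset (Fin m) → ℝ} (hc : CancelableVal v)
    (x y : Fin m) (hxy : v {x} ≤ v {y}) :
    ∀ S : Finset (Fin m), x ∉ S → y ∉ S → v (insert x S) ≤ v (insert y S) := by
  intro S
  induction S using Finset.induction_on with
  | empty => intro _ _; simpa using hxy
  | @insert g S' hg ih =>
    intro hx hy
    have hgx : g ≠ x := fun h => hx (h ▸ Finset.mem_insert_self g S')
    have hgy : g ≠ y := fun h => hy (h ▸ Finset.mem_insert_self g S')
    have hx' : x ∉ S' := fun h => hx (Finset.mem_insert_of_mem h)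
    have hy' : y ∉ S' := fun h => hy (Finset.mem_insert_of_mem h)
    rw [Finset.insert_comm x g S', Finset.insert_comm y g S']
    exact cancel_le_aux hc (by simp [hgx, hgy, hg]) (by simp [hgx, hgy, hg])
      (ih hx' hy')

lemma inj_map_bound {m : ℕ} {v : Finset (Fin m) → ℝ}
    (hv : IsValuation v) (hc : CancelableVal v) :
    ∀ N : ℕ, ∀ X B : Finset (Fin m), ∀ f : Fin m → Fin m,
      (X.filter fun z => f z ≠ z).card ≤ N →
      (∀ g ∈ X, f g ∈ B) → (∀ g ∈ X, v {g} ≤ v {f g}) →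
      (∀ g ∈ X, ∀ h ∈ X, f g = f h → g = h) → v X ≤ v B := by
  intro N
  induction N with
  | zero =>
    intro X B f hcard hmap _ _
    have hfix : ∀ z ∈ X, f z = z := by
      intro z hz
      by_contra hne
      have : z ∈ X.filter fun z => f z ≠ z := Finset.mem_filter.mpr ⟨hz, hne⟩
      have := Finset.card_pos.mpr ⟨z, this⟩
      omega
    have hsub : X ⊆ B := fun z hz => hfix z hz ▸ hmap z hz
    exact hv.2 X B hsub
  | succ N ih =>
    intro X B f hcard hmap hval hinj
    by_cases hall : ∀ x ∈ X, f x ∈ X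
    · -- f maps X into X injectively, hence X = f(X) ⊆ B
      have himg : X.image f ⊆ X := by
        intro z hz
        obtain ⟨w, hw, rfl⟩ := Finset.mem_image.mp hz
        exact hall w hw
      have hcardeq : X.card ≤ (X.image f).card := by
        rw [Finset.card_image_of_injOn (fun a ha b hb => hinj a ha b hb)]
      have heq : X.image f = X := Finset.eq_of_subset_of_card_le himg hcardeq
      have hsub : X ⊆ B := by
        intro z hz
        rw [← heq] at hz
        obtain ⟨w, hw, rfl⟩ := Finset.mem_image.mp hz
        exact hmap w hw
      exact hv.2 X B hsub
    · push_neg at hall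
      obtain ⟨x, hxX, hfxX⟩ := hall
      have hfxne : f x ≠ x := fun h => hfxX (by rw [h]; exact hxX)
      set X' : Finset (Fin m) := insert (f x) (X.erase x) with hX'
      set f' : Fin m → Fin m := Function.update f (f x) (f x) with hf'
      have hfxE : f x ∉ X.erase x := fun h => hfxX (Finset.mem_of_mem_erase h)
      -- v X ≤ v X'
      have step1 : v X ≤ v X' := by
        have : X = insert x (X.erase x) := (Finset.insert_erase hxX).symm
        rw [this]
        exact swap_aux hc x (f x) (hval x hxX) (X.erase x)
          (Finset.notMem_erase x X) hfxE
      -- the filter shrinks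
      have hcard' : (X'.filter fun z => f' z ≠ z).card ≤ N := by
        have hsubf : (X'.filter fun z => f' z ≠ z) ⊆
            (X.filter fun z => f z ≠ z).erase x := by
          intro z hz
          obtain ⟨hz1, hz2⟩ := Finset.mem_filter.mp hz
          rcases Finset.mem_insert.mp hz1 with h | h
          · exfalso; apply hz2; rw [h, hf']; simp
          · have hznex : z ≠ x := Finset.ne_of_mem_erase h
            have hznefx : z ≠ f x := fun heq => hfxE (heq ▸ h)
            have : f' z = f z := Function.update_of_ne hznefx _ f
            refine Finset.mem_erase.mpr ⟨hznex, Finset.mem_filter.mpr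
              ⟨Finset.mem_of_mem_erase h, ?_⟩⟩
            rw [← this]; exact hz2
        have hxmem : x ∈ X.filter fun z => f z ≠ z :=
          Finset.mem_filter.mpr ⟨hxX, hfxne⟩
        have := Finset.card_le_card hsubf
        rw [Finset.card_erase_of_mem hxmem] at this
        omega
      have hmap' : ∀ g ∈ X', f' g ∈ B := by
        intro g hg
        rcases Finset.mem_insert.mp hg with h | h
        · rw [h, hf']; simpa using hmap x hxX
        · have hgne : g ≠ f x := fun heq => hfxE (heq ▸ h)
          rw [hf', Function.update_of_ne hgne]
          exact hmap g (Finset.mem_of_mem_erase h)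
      have hval' : ∀ g ∈ X', v {g} ≤ v {f' g} := by
        intro g hg
        rcases Finset.mem_insert.mp hg with h | h
        · rw [h, hf']; simp
        · have hgne : g ≠ f x := fun heq => hfxE (heq ▸ h)
          rw [hf', Function.update_of_ne hgne]
          exact hval g (Finset.mem_of_mem_erase h)
      have hinj' : ∀ g ∈ X', ∀ h ∈ X', f' g = f' h → g = h := by
        intro g hg h hh heq
        rcases Finset.mem_insert.mp hg with hg1 | hg1 <;>
          rcases Finset.mem_insert.mp hh with hh1 | hh1
        · rw [hg1, hh1]
        · exfalso
          have hhne : h ≠ f x := fun heq2 => hfxE (heq2 ▸ hh1)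
          rw [hg1, hf'] at heq
          rw [Function.update_self, Function.update_of_ne hhne] at heq
          have := hinj x hxX h (Finset.mem_of_mem_erase hh1) heq
          exact Finset.notMem_erase x X (this ▸ hh1)
        · exfalso
          have hgne : g ≠ f x := fun heq2 => hfxE (heq2 ▸ hg1)
          rw [hh1, hf'] at heq
          rw [Function.update_of_ne hgne, Function.update_self] at heq
          have := hinj x hxX g (Finset.mem_of_mem_erase hg1) heq.symm
          exact Finset.notMem_erase x X (this ▸ hg1)
        · have hgne : g ≠ f x := fun heq2 => hfxE (heq2 ▸ hg1)
          have hhne : h ≠ f x := fun heq2 => hfxE (heq2 ▸ hh1)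
          rw [hf', Function.update_of_ne hgne, Function.update_of_ne hhne] at heq
          exact hinj g (Finset.mem_of_mem_erase hg1) h
            (Finset.mem_of_mem_erase hh1) heq
      exact le_trans step1 (ih X' B f' hcard' hmap' hval' hinj')

/-- For a normalized monotone subadditive cancelable valuation `v`: if there is a map
`f : X → B` with `v({g}) ≤ v({f(g)})` for every `g ∈ X` and `|f⁻¹(b)| ≤ 2` for every
`b ∈ B`, then `v(X) ≤ 2 · v(B)`. -/
theorem two_to_one_mapping_bound {m : ℕ} (v : Finset (Fin m) → ℝ)
    (hv : IsValuation v) (hsub : SubadditiveVal v) (hc : CancelableVal v)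
    (X B : Finset (Fin m)) (f : Fin m → Fin m)
    (hmap : ∀ g ∈ X, f g ∈ B)
    (hval : ∀ g ∈ X, v {g} ≤ v {f g})
    (hpre : ∀ b ∈ B, (X.filter fun g => f g = b).card ≤ 2) :
    v X ≤ 2 * v B := by
  classical
  set P : Fin m → Prop := fun g => ∀ g' ∈ X, f g' = f g → g ≤ g' with hP
  set X1 : Finset (Fin m) := X.filter P with hX1
  set X2 : Finset (Fin m) := X.filter (fun g => ¬ P g) with hX2
  have hunion : X1 ∪ X2 = X := Finset.filter_union_filter_not_eq P X
  -- injectivity on X1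
  have hinj1 : ∀ g ∈ X1, ∀ h ∈ X1, f g = f h → g = h := by
    intro g hg h hh heq
    obtain ⟨hgX, hgP⟩ := Finset.mem_filter.mp hg
    obtain ⟨hhX, hhP⟩ := Finset.mem_filter.mp hh
    exact le_antisymm (hgP h hhX heq.symm) (hhP g hgX heq)
  -- injectivity on X2
  have hinj2 : ∀ g ∈ X2, ∀ h ∈ X2, f g = f h → g = h := by
    intro g hg h hh heq
    by_contra hne
    obtain ⟨hgX, hgP⟩ := Finset.mem_filter.mp hg
    obtain ⟨hhX, hhP⟩ := Finset.mem_filter.mp hh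
    set b := f g with hb
    have hF : ({g, h} : Finset (Fin m)) ⊆ X.filter (fun z => f z = b) := by
      intro z hz
      rcases Finset.mem_insert.mp hz with rfl | hz
      · exact Finset.mem_filter.mpr ⟨hgX, rfl⟩
      · rw [Finset.mem_singleton.mp hz]
        exact Finset.mem_filter.mpr ⟨hhX, heq.symm⟩
    have hcard2 : ({g, h} : Finset (Fin m)).card = 2 := Finset.card_pair hne
    have hFle : (X.filter (fun z => f z = b)).card ≤ 2 := hpre b (hmap g hgX)
    have hFeq : X.filter (fun z => f z = b) = {g, h} :=
      (Finset.eq_of_subset_of_card_le hF (by rw [hcard2]; exact hFle)).symm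
    -- the minimum of g, h satisfies P
    rcases le_total g h with hle | hle
    · apply hgP
      intro g' hg' heq'
      have : g' ∈ X.filter (fun z => f z = b) := Finset.mem_filter.mpr ⟨hg', heq'⟩
      rw [hFeq] at this
      rcases Finset.mem_insert.mp this with rfl | h'
      · exact le_refl _
      · rw [Finset.mem_singleton.mp h']; exact hle
    · apply hhP
      intro g' hg' heq'
      have : g' ∈ X.filter (fun z => f z = b) :=
        Finset.mem_filter.mpr ⟨hg', by rw [heq', ← heq]⟩
      rw [hFeq] at this
      rcases Finset.mem_insert.mp this with rfl | h'
      · exact hle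
      · exact le_of_eq (Finset.mem_singleton.mp h').symm
  have h1 : v X1 ≤ v B :=
    inj_map_bound hv hc (X1.filter fun z => f z ≠ z).card X1 B f le_rfl
      (fun g hg => hmap g (Finset.mem_of_mem_filter g hg))
      (fun g hg => hval g (Finset.mem_of_mem_filter g hg)) hinj1
  have h2 : v X2 ≤ v B :=
    inj_map_bound hv hc (X2.filter fun z => f z ≠ z).card X2 B f le_rfl
      (fun g hg => hmap g (Finset.mem_of_mem_filter g hg))
      (fun g hg => hval g (Finset.mem_of_mem_filter g hg)) hinj2
  calc v X = v (X1 ∪ X2) := by rw [hunion]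
    _ ≤ v X1 + v X2 := hsub X1 X2
    _ ≤ 2 * v B := by linarith
end

section
/- Consider Mechanism 2 (Round-Robin for general valuations) run on a profile (v_1, …, v_n) of normalized, monotone valuations over G, where agent 1's valuation v_1 is submodular, and let A = (A_1, …, A_n) be the resulting allocation. Then v_1(A_1) ≥ v_1(G)/n. Consequently, by monotonicity, for every normalized monotone misreport v_1' by agent 1, the bundle agent 1 receives from Mechanism 2 under the misreport has v_1-value at most n · v_1(A_1); hence Mechanism 2 admits an incentive ratio of at most n for submodular valuations. -/
section Aux
variable {n m : ℕ}

lemma chooseFavorite_spec (f : Fin m → ℝ) (S : Finset (Fin m)) (h : S.Nonempty) :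
    chooseFavorite f S h ∈ S ∧ ∀ g ∈ S, f g ≤ f (chooseFavorite f S h) := by
  have hmem := Finset.min'_mem (S.filter fun g => ∀ h' ∈ S, f h' ≤ f g) (by
    obtain ⟨b, hb, hmax⟩ := S.exists_max_image f h
    exact ⟨b, Finset.mem_filter.mpr ⟨hb, hmax⟩⟩)
  rw [Finset.mem_filter] at hmem
  exact ⟨hmem.1, hmem.2⟩

lemma submod_sum_bound {v : Finset (Fin m) → ℝ}
    (hs : SubmodularVal v) (hmono : ∀ S T : Finset (Fin m), S ⊆ T → v S ≤ v T)
    (A : Finset (Fin m)) (T : Finset (Fin m)) :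
    v (A ∪ T) ≤ v A + ∑ g ∈ T \ A, (v (insert g A) - v A) := by
  induction T using Finset.induction_on with
  | empty => simp
  | @insert a T' ha ih =>
    by_cases haA : a ∈ A
    · rw [Finset.insert_sdiff_of_mem _ haA]
      have : A ∪ insert a T' = A ∪ T' := by
        rw [Finset.union_insert, Finset.insert_eq_self.mpr (Finset.mem_union_left _ haA)]
      rw [this]; exact ih
    · have haT : a ∉ A ∪ T' := by simp [haA, ha]
      have h1 : v (insert a (A ∪ T')) - v (A ∪ T') ≤ v (insert a A) - v A :=
        hs A (A ∪ T') Finset.subset_union_left a haT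
      rw [Finset.union_insert]
      rw [Finset.insert_sdiff_of_notMem _ haA,
        Finset.sum_insert (by simp [ha, haA])]
      linarith

lemma rrState_succ_pos (hn : 0 < n) (score : Fin n → Finset (Fin m) → Fin m → ℝ)
    (k : ℕ) (h : (rrState score k).2.Nonempty) :
    rrState score (k + 1) =
      (Function.update (rrState score k).1 ⟨k % n, Nat.mod_lt k hn⟩
        (insert (chooseFavorite
            (score ⟨k % n, Nat.mod_lt k hn⟩ ((rrState score k).1 ⟨k % n, Nat.mod_lt k hn⟩))
            (rrState score k).2 h)
          ((rrState score k).1 ⟨k % n, Nat.mod_lt k hn⟩)),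
       (rrState score k).2.erase (chooseFavorite
            (score ⟨k % n, Nat.mod_lt k hn⟩ ((rrState score k).1 ⟨k % n, Nat.mod_lt k hn⟩))
            (rrState score k).2 h)) := by
  rw [rrState]
  simp only [dif_pos hn, dif_pos h]

lemma rrState_succ_empty (score : Fin n → Finset (Fin m) → Fin m → ℝ)
    (k : ℕ) (h : ¬ (rrState score k).2.Nonempty) :
    rrState score (k + 1) = rrState score k := by
  rw [rrState]
  by_cases hn : 0 < n
  · simp only [dif_pos hn, dif_neg h]
  · simp only [dif_neg hn]

end Aux
section Main
variable {n m : ℕ}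

lemma nat_mod_eq (n a c q : ℕ) (h : a = c + n * q) (hc : c < n) : a % n = c := by
  subst h; rw [Nat.add_mul_mod_self_left, Nat.mod_eq_of_lt hc]

lemma rr_invariant (hn : 0 < n) (v : Fin n → Finset (Fin m) → ℝ)
    (hv : ∀ j, IsValuation (v j)) (hsubm : SubmodularVal (v ⟨0, hn⟩)) (k : ℕ) :
    ∀ A : Finset (Fin m), ∀ R : Finset (Fin m),
    A = (rrState (fun i A g => v i (insert g A) - v i A) k).1 ⟨0, hn⟩ →
    R = (rrState (fun i A g => v i (insert g A) - v i A) k).2 →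
    Disjoint A R ∧ R.card = m - k ∧
    ∃ δ : ℝ, 0 ≤ δ ∧
      (∀ g ∈ R, v ⟨0, hn⟩ (insert g A) - v ⟨0, hn⟩ A ≤ δ) ∧
      ∑ g ∈ (Finset.univ \ R) \ A, (v ⟨0, hn⟩ (insert g A) - v ⟨0, hn⟩ A)
        + (if R.Nonempty then ((n - 1 - ((k + n - 1) % n) : ℕ) : ℝ) else 0) * δ
        ≤ ((n : ℝ) - 1) * v ⟨0, hn⟩ A := by
  set i0 : Fin n := ⟨0, hn⟩
  set v0 := v i0 with hv0
  have hmono := (hv i0).2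
  have h0 : v0 ∅ = 0 := (hv i0).1
  induction k with
  | zero =>
    intro A R hA hR
    simp only [rrState] at hA hR
    subst hA hR
    refine ⟨by simp, by simp, ?_⟩
    have hc0 : (n - 1 - ((0 + n - 1) % n) : ℕ) = 0 := by
      have h1 : (0 + n - 1) % n = n - 1 := by
        rw [Nat.zero_add]; exact Nat.mod_eq_of_lt (by omega)
      omega
    by_cases hm : (Finset.univ : Finset (Fin m)).Nonempty
    · obtain ⟨b, hb, hmax⟩ :=
        Finset.exists_max_image Finset.univ (fun g => v0 (insert g ∅) - v0 ∅) hm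
      refine ⟨v0 (insert b ∅) - v0 ∅,
        by have := hmono ∅ (insert b ∅) (by simp); linarith, hmax, ?_⟩
      simp [hc0, h0]
    · refine ⟨0, le_refl 0, by intro g hg; exact absurd ⟨g, hg⟩ hm, ?_⟩
      simp [h0]
  | succ k ih =>
    intro A R hA hR
    set score := fun (i : Fin n) (B : Finset (Fin m)) (g : Fin m) =>
      v i (insert g B) - v i B with hscore
    set Ak := (rrState score k).1 i0 with hAk
    set Rk := (rrState score k).2 with hRk
    obtain ⟨hdisj, hcard, δ, hδ0, hδmax, hδsum⟩ := ih Ak Rk rfl rfl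
    have hq : n * (k / n) + k % n = k := Nat.div_add_mod k n
    have hrn : k % n < n := Nat.mod_lt k hn
    have hm1 : n * (k / n + 1) = n * (k / n) + n := by ring
    by_cases hne : Rk.Nonempty
    · set i : Fin n := ⟨k % n, Nat.mod_lt k hn⟩ with hi
      obtain ⟨g0, hg0mem, hg0max, hstep⟩ :
          ∃ g0, g0 ∈ Rk ∧
            (∀ g ∈ Rk, score i ((rrState score k).1 i) g ≤ score i ((rrState score k).1 i) g0) ∧
            rrState score (k + 1) =
              (Function.update (rrState score k).1 i (insert g0 ((rrState score k).1 i)),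
                Rk.erase g0) :=
        ⟨_, (chooseFavorite_spec _ _ hne).1, (chooseFavorite_spec _ _ hne).2,
          rrState_succ_pos hn score k hne⟩
      have hg0nA : g0 ∉ Ak := fun hmem => (Finset.disjoint_left.mp hdisj hmem) hg0mem
      have hRnew : R = Rk.erase g0 := by rw [hR, hstep]
      have hcard' : R.card = m - (k + 1) := by
        rw [hRnew, Finset.card_erase_of_mem hg0mem, hcard]; omega
      by_cases hk0 : k % n = 0
      · -- agent 0 picks
        have hii0 : i = i0 := by simp only [hi, i0]; congr 1
        rw [hii0] at hg0max hstep
        have hAnew : A = insert g0 Ak := by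
          rw [hA, hstep]
          show Function.update (rrState score k).1 i0
            (insert g0 ((rrState score k).1 i0)) i0 = insert g0 Ak
          rw [Function.update_self]
        subst hAnew
        subst hRnew
        have hdisj' : Disjoint (insert g0 Ak) (Rk.erase g0) := by
          rw [Finset.disjoint_left]
          intro x hx hxR
          rcases Finset.mem_insert.mp hx with h1 | h1
          · exact (Finset.mem_erase.mp hxR).1 h1
          · exact Finset.disjoint_left.mp hdisj h1 (Finset.mem_of_mem_erase hxR)
        refine ⟨hdisj', hcard', ?_⟩
        set δ' := v0 (insert g0 Ak) - v0 Ak with hδ'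
        have hδ'0 : 0 ≤ δ' := by
          have := hmono Ak (insert g0 Ak) (Finset.subset_insert _ _)
          simp only [hδ']; rw [hv0]; linarith
        have hMaxOverRk : ∀ g ∈ Rk, v0 (insert g Ak) - v0 Ak ≤ δ' := fun g hg => hg0max g hg
        refine ⟨δ', hδ'0, ?_, ?_⟩
        · intro g hg
          have hgRk := Finset.mem_of_mem_erase hg
          have hgne : g ≠ g0 := (Finset.mem_erase.mp hg).1
          have hgnA : g ∉ insert g0 Ak := by
            simp only [Finset.mem_insert, not_or]
            exact ⟨hgne, fun hmem => Finset.disjoint_left.mp hdisj hmem hgRk⟩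
          have hsub : v0 (insert g (insert g0 Ak)) - v0 (insert g0 Ak)
              ≤ v0 (insert g Ak) - v0 Ak :=
            hsubm Ak (insert g0 Ak) (Finset.subset_insert _ _) g hgnA
          exact le_trans hsub (hMaxOverRk g hgRk)
        · have hstolen_eq : (Finset.univ \ Rk.erase g0) \ insert g0 Ak
              = (Finset.univ \ Rk) \ Ak := by
            ext x
            simp only [Finset.mem_sdiff, Finset.mem_univ, true_and, Finset.mem_erase,
              Finset.mem_insert, not_and, not_or]
            constructor
            · rintro ⟨h1, h2, h3⟩
              exact ⟨fun hx => absurd (h1 h2) (by simp [hx]), h3⟩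
            · rintro ⟨h1, h2⟩
              have hne' : x ≠ g0 := fun hx => h1 (hx ▸ hg0mem)
              exact ⟨fun _ => h1, hne', h2⟩
          have hterm : ∀ x ∈ (Finset.univ \ Rk) \ Ak,
              v0 (insert x (insert g0 Ak)) - v0 (insert g0 Ak)
                ≤ v0 (insert x Ak) - v0 Ak := by
            intro x hx
            simp only [Finset.mem_sdiff, Finset.mem_univ, true_and] at hx
            have hxne : x ≠ g0 := fun h => hx.1 (h ▸ hg0mem)
            have hxnA : x ∉ insert g0 Ak := by simp [hxne, hx.2]
            exact hsubm Ak (insert g0 Ak) (Finset.subset_insert _ _) x hxnA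
          have hsum_le :
              ∑ g ∈ (Finset.univ \ Rk.erase g0) \ insert g0 Ak,
                  (v0 (insert g (insert g0 Ak)) - v0 (insert g0 Ak))
              ≤ ∑ g ∈ (Finset.univ \ Rk) \ Ak, (v0 (insert g Ak) - v0 Ak) := by
            rw [hstolen_eq]; exact Finset.sum_le_sum hterm
          have hck : (n - 1 - ((k + n - 1) % n) : ℕ) = 0 := by
            have h1 : (k + n - 1) % n = n - 1 :=
              nat_mod_eq n _ _ (k / n) (by omega) (by omega)
            omega
          have hold : ∑ g ∈ (Finset.univ \ Rk) \ Ak, (v0 (insert g Ak) - v0 Ak)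
              ≤ ((n : ℝ) - 1) * v0 Ak := by
            rw [if_pos hne, hck] at hδsum
            simpa using hδsum
          have hcoef : (if (Rk.erase g0).Nonempty
              then ((n - 1 - ((k + 1 + n - 1) % n) : ℕ) : ℝ) else 0) ≤ (n : ℝ) - 1 := by
            have h1 : (n - 1 - ((k + 1 + n - 1) % n) : ℕ) ≤ n - 1 := by omega
            have h2 : ((n - 1 - ((k + 1 + n - 1) % n) : ℕ) : ℝ) ≤ (n : ℝ) - 1 := by
              calc ((n - 1 - ((k + 1 + n - 1) % n) : ℕ) : ℝ) ≤ ((n - 1 : ℕ) : ℝ) := by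
                    exact_mod_cast h1
                _ = (n : ℝ) - 1 := by rw [Nat.cast_sub hn]; simp
            split
            · exact h2
            · have : (1 : ℝ) ≤ n := by exact_mod_cast hn
              linarith
          have hmul : (if (Rk.erase g0).Nonempty
                then ((n - 1 - ((k + 1 + n - 1) % n) : ℕ) : ℝ) else 0) * δ'
              ≤ ((n : ℝ) - 1) * δ' := mul_le_mul_of_nonneg_right hcoef hδ'0
          have hgoal_exp : ((n : ℝ) - 1) * v0 (insert g0 Ak)
              = ((n : ℝ) - 1) * v0 Ak + ((n : ℝ) - 1) * δ' := by
            rw [hδ']; ring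
          linarith
      · -- another agent picks
        have hii0 : i ≠ i0 := by
          intro h
          apply hk0
          have := congrArg Fin.val h
          simpa using this
        have hAnew : A = Ak := by
          rw [hA, hstep]
          exact Function.update_of_ne (Ne.symm hii0) _ _
        subst hAnew
        subst hRnew
        have hdisj' : Disjoint Ak (Rk.erase g0) :=
          hdisj.mono_right (Finset.erase_subset _ _)
        refine ⟨hdisj', hcard', δ, hδ0, ?_, ?_⟩
        · intro g hg
          exact hδmax g (Finset.mem_of_mem_erase hg)
        · have hstolen_eq : (Finset.univ \ Rk.erase g0) \ Ak
              = insert g0 ((Finset.univ \ Rk) \ Ak) := by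
            ext x
            by_cases hx : x = g0
            · subst hx
              simp [hg0nA, hg0mem]
            · simp [Finset.mem_erase, hx]
          have hg0notin : g0 ∉ (Finset.univ \ Rk) \ Ak := by simp [hg0mem]
          have hsum_eq : ∑ g ∈ (Finset.univ \ Rk.erase g0) \ Ak, (v0 (insert g Ak) - v0 Ak)
              = (v0 (insert g0 Ak) - v0 Ak)
                + ∑ g ∈ (Finset.univ \ Rk) \ Ak, (v0 (insert g Ak) - v0 Ak) := by
            rw [hstolen_eq, Finset.sum_insert hg0notin]
          have hmarg : v0 (insert g0 Ak) - v0 Ak ≤ δ := hδmax g0 hg0mem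
          have h1 : (k + n - 1) % n = k % n - 1 :=
            nat_mod_eq n _ _ (k / n + 1) (by omega) (by omega)
          have h2 : (k + 1 + n - 1) % n = k % n :=
            nat_mod_eq n _ _ (k / n + 1) (by omega) (by omega)
          have hck : (n - 1 - (k % n - 1) : ℕ) = (n - 1 - k % n : ℕ) + 1 := by omega
          rw [if_pos hne, h1, hck] at hδsum
          have hcast : (((n - 1 - k % n : ℕ) + 1 : ℕ) : ℝ)
              = ((n - 1 - k % n : ℕ) : ℝ) + 1 := by push_cast; ring
          rw [hcast] at hδsum
          have hexp : (((n - 1 - k % n : ℕ) : ℝ) + 1) * δ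
              = ((n - 1 - k % n : ℕ) : ℝ) * δ + δ := by ring
          rw [h2]
          by_cases hne' : (Rk.erase g0).Nonempty
          · rw [if_pos hne']
            linarith
          · rw [if_neg hne']
            have hpos : (0:ℝ) ≤ ((n - 1 - k % n : ℕ) : ℝ) * δ := by positivity
            linarith
    · -- remaining empty: state frozen
      have hstep := rrState_succ_empty score k hne
      have hAe : A = Ak := by rw [hA, hstep]
      have hRe : R = Rk := by rw [hR, hstep]
      subst hAe; subst hRe
      have hRke : Rk = ∅ := Finset.not_nonempty_iff_eq_empty.mp hne
      have hc0 : Rk.card = 0 := by rw [hRke]; simp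
      refine ⟨hdisj, by omega, δ, hδ0, hδmax, ?_⟩
      rw [if_neg hne] at hδsum ⊢
      exact hδsum

end Main
/-- Mechanism 2 (Round-Robin for general valuations) with a submodular agent 1:
truthfully, agent 1 gets at least a 1/n fraction of his value for all goods, and hence
no normalized monotone misreport can increase his utility by more than a factor of n. -/
theorem roundRobin2_incentive_submodular {n m : ℕ} (hn : 0 < n)
    (v : Fin n → Finset (Fin m) → ℝ) (hv : ∀ j, IsValuation (v j))
    (hsubm : SubmodularVal (v ⟨0, hn⟩)) :
    v ⟨0, hn⟩ Finset.univ / n ≤ v ⟨0, hn⟩ (roundRobin2 v ⟨0, hn⟩) ∧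
    ∀ v' : Finset (Fin m) → ℝ, IsValuation v' →
      v ⟨0, hn⟩ (roundRobin2 (Function.update v ⟨0, hn⟩ v') ⟨0, hn⟩) ≤
        n * v ⟨0, hn⟩ (roundRobin2 v ⟨0, hn⟩) := by
  set i0 : Fin n := ⟨0, hn⟩
  set v0 := v i0 with hv0
  have hmono := (hv i0).2
  obtain ⟨hdisj, hcard, δ, hδ0, hδmax, hδsum⟩ :=
    rr_invariant hn v hv hsubm m _ _ rfl rfl
  set score := fun (i : Fin n) (B : Finset (Fin m)) (g : Fin m) =>
    v i (insert g B) - v i B with hscore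
  set A := (rrState score m).1 i0 with hA
  have hRR : roundRobin2 v i0 = A := rfl
  have hRe : (rrState score m).2 = ∅ := Finset.card_eq_zero.mp (by rw [hcard]; omega)
  rw [hRe] at hδsum
  rw [if_neg (by simp : ¬ (∅ : Finset (Fin m)).Nonempty)] at hδsum
  rw [Finset.sdiff_empty] at hδsum
  have hbound := submod_sum_bound hsubm hmono A Finset.univ
  rw [Finset.union_eq_right.mpr (Finset.subset_univ A)] at hbound
  have main : v0 Finset.univ ≤ (n : ℝ) * v0 A := by
    have : v0 Finset.univ ≤ v0 A + ((n : ℝ) - 1) * v0 A := by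
      calc v0 Finset.univ ≤ v0 A + ∑ g ∈ Finset.univ \ A, (v0 (insert g A) - v0 A) := hbound
        _ ≤ v0 A + ((n : ℝ) - 1) * v0 A := by linarith
    linarith
  have hnpos : (0 : ℝ) < n := by exact_mod_cast hn
  constructor
  · rw [hRR, div_le_iff₀ hnpos]
    linarith
  · intro v' hv'
    rw [hRR]
    have h1 : v0 (roundRobin2 (Function.update v i0 v') i0) ≤ v0 Finset.univ :=
      hmono _ _ (Finset.subset_univ _)
    linarith
end

section
/- For all integers n ≥ 2 and m ≥ n, there exist a profile (v_1, …, v_n) of normalized, monotone, XOS valuations over G = {g_1, …, g_m} and an additive misreport v_1' for agent 1 such that, under Mechanism 2 (Round-Robin for general valuations), agent 1's truthful utility is exactly 1 while the bundle he receives after misreporting v_1' has v_1-value exactly ⌈m/n⌉. Hence the incentive ratio of Mechanism 2 for XOS valuations is at least ⌈m/n⌉. -/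
/-!
Cut the goods into consecutive blocks of `n` (the last one possibly shorter) and call the last
good of each block a block end; there are `⌈m/n⌉` of them. Agent 1 values a bundle by the larger
of "it contains good `0`" and the number of block ends in it, while the other agents value
nothing and so always take the remaining good of smallest index. Truthfully, agent 1 first takes
good `0`, after which no single good has positive marginal value; the goods then go out in index
order and agent 1 gets the first good of every block, among them at most one block end. Reporting
the number of block ends instead, agent 1 opens every round by taking the end of the current
block, just ahead of the others, who sweep through the rest of the block in index order; so he
collects all `⌈m/n⌉` block ends.

Each run is identified by exhibiting its schedule (good ↦ stage) and checking that every
scheduled pick is the one the mechanism makes.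
-/

open Finset

section Favorite

variable {m : ℕ}

def IsFavorite (f : Fin m → ℝ) (S : Finset (Fin m)) (g : Fin m) : Prop :=
  g ∈ S ∧ ∀ g' ∈ S, f g' ≤ f g ∧ (f g ≤ f g' → g ≤ g')

theorem chooseFavorite_eq_of_isFavorite {f : Fin m → ℝ} {S : Finset (Fin m)} {g : Fin m}
    (hg : IsFavorite f S g) (hS : S.Nonempty) : chooseFavorite f S hS = g := by
  refine le_antisymm (min'_le _ _ (mem_filter.mpr ⟨hg.1, fun g' hg' => (hg.2 g' hg').1⟩))
    (le_min' _ _ _ fun g' hg' => ?_)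
  rw [mem_filter] at hg'
  exact (hg.2 g' hg'.1).2 (hg'.2 g hg.1)

theorem isFavorite_of_isLeast {f : Fin m → ℝ} {S : Finset (Fin m)} {g : Fin m}
    (hg : IsLeast (S : Set (Fin m)) g) (hmax : ∀ g' ∈ S, f g' ≤ f g) : IsFavorite f S g :=
  ⟨hg.1, fun g' hg' => ⟨hmax g' hg', fun _ => hg.2 hg'⟩⟩

end Favorite

section Schedule

variable {n m : ℕ}

/-- Under a schedule `σ`, good `g` is taken at stage `σ g`, hence by agent `σ g % n`. -/
def scheduledBundle (n : ℕ) (σ : Fin m → Fin m) (k i : ℕ) : Finset (Fin m) :=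
  univ.filter fun g => (σ g : ℕ) < k ∧ (σ g : ℕ) % n = i

def scheduledPool (σ : Fin m → Fin m) (k : ℕ) : Finset (Fin m) :=
  univ.filter fun g => k ≤ (σ g : ℕ)

theorem rrState_eq_of_isFavorite {score : Fin n → Finset (Fin m) → Fin m → ℝ} (hn : 0 < n)
    {σ : Fin m → Fin m} (hσ : Function.Injective σ)
    (hfav : ∀ g, IsFavorite (score ⟨σ g % n, Nat.mod_lt _ hn⟩
      (scheduledBundle n σ (σ g) (σ g % n))) (scheduledPool σ (σ g)) g) :
    ∀ k ≤ m, rrState score k = (fun i : Fin n => scheduledBundle n σ k i, scheduledPool σ k) := by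
  intro k
  induction k with
  | zero =>
    intro _
    simp [rrState, scheduledBundle, scheduledPool]
  | succ k ih =>
    intro hk
    obtain ⟨g, hg⟩ := Finite.injective_iff_surjective.mp hσ ⟨k, hk⟩
    obtain rfl : (σ g : ℕ) = k := by rw [hg]
    have hne : (scheduledPool σ (σ g)).Nonempty := ⟨g, (hfav g).1⟩
    rw [rrState, ih (by omega)]
    simp only [dif_pos hn, dif_pos hne, chooseFavorite_eq_of_isFavorite (hfav g)]
    refine Prod.ext (funext fun i => ?_) ?_
    · ext g'
      dsimp only
      rw [Function.update_apply]
      split_ifs with hi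
      all_goals
        simp only [scheduledBundle, mem_insert, mem_filter, mem_univ, true_and,
          ← hσ.eq_iff (a := g'), Fin.ext_iff] at hi ⊢
        rcases eq_or_ne (σ g' : ℕ) (σ g) with h | h
        · rw [h]; omega
        · omega
    · ext g'
      simp only [scheduledPool, mem_erase, mem_filter, mem_univ, true_and, ← hσ.eq_iff (a := g'),
        ne_eq, Fin.ext_iff]
      omega

theorem disjoint_scheduledBundle_scheduledPool (σ : Fin m → Fin m) (k i : ℕ) :
    Disjoint (scheduledBundle n σ k i) (scheduledPool σ k) := by
  simp only [disjoint_left, scheduledBundle, scheduledPool, mem_filter, mem_univ, true_and]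
  omega

def marginal (v : Finset (Fin m) → ℝ) (A : Finset (Fin m)) (g : Fin m) : ℝ :=
  v (insert g A) - v A

theorem roundRobin2_eq_of_isFavorite {v : Fin n → Finset (Fin m) → ℝ} (hn : 0 < n)
    {σ : Fin m → Fin m} (hσ : Function.Injective σ)
    (hfav : ∀ g, IsFavorite (marginal (v ⟨σ g % n, Nat.mod_lt _ hn⟩)
      (scheduledBundle n σ (σ g) (σ g % n))) (scheduledPool σ (σ g)) g) (i : Fin n) :
    roundRobin2 v i = univ.filter fun g => (σ g : ℕ) % n = i := by
  change (rrState (fun i => marginal (v i)) m).1 i = _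
  rw [rrState_eq_of_isFavorite hn hσ hfav m le_rfl]
  ext g
  simp [scheduledBundle]

end Schedule

section Valuations

variable {m : ℕ}

theorem addVal_additive (w : Fin m → ℝ) : AdditiveVal (addVal w) :=
  fun _ _ h => sum_union h

theorem isValuation_addVal {w : Fin m → ℝ} (hw : 0 ≤ w) : IsValuation (addVal w) :=
  ⟨sum_empty, fun _ _ h => sum_le_sum_of_subset_of_nonneg h fun g _ _ => hw g⟩

theorem IsValuation.max {v w : Finset (Fin m) → ℝ} (hv : IsValuation v) (hw : IsValuation w) :
    IsValuation fun S => max (v S) (w S) :=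
  ⟨by simp [hv.1, hw.1], fun S T h => max_le_max (hv.2 S T h) (hw.2 S T h)⟩

theorem xosVal_max {v w : Finset (Fin m) → ℝ} (hv : AdditiveVal v) (hw : AdditiveVal w) :
    XOSVal fun S => max (v S) (w S) := by
  refine ⟨1, ![v, w], fun j => by fin_cases j <;> assumption, fun S => ⟨?_, fun j => ?_⟩⟩
  · rcases max_choice (v S) (w S) with h | h
    exacts [⟨0, h⟩, ⟨1, h⟩]
  · fin_cases j
    exacts [le_max_left _ _, le_max_right _ _]

theorem xosVal_of_additive {v : Finset (Fin m) → ℝ} (hv : AdditiveVal v) : XOSVal v := by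
  simpa using xosVal_max hv hv

def countVal (T : Finset (Fin m)) : Finset (Fin m) → ℝ :=
  addVal fun g => if g ∈ T then 1 else 0

theorem countVal_apply (T S : Finset (Fin m)) : countVal T S = #(S ∩ T) := by
  simp [countVal, addVal]

theorem marginal_countVal (T : Finset (Fin m)) {A : Finset (Fin m)} {g : Fin m} (hg : g ∉ A) :
    marginal (countVal T) A g = if g ∈ T then 1 else 0 := by
  simp [marginal, countVal, addVal, sum_insert hg]

theorem isValuation_countVal (T : Finset (Fin m)) : IsValuation (countVal T) :=
  isValuation_addVal fun g => by dsimp; positivity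

end Valuations

section Construction

variable {n m : ℕ}

def blockEnds (n m : ℕ) : Finset (Fin m) :=
  univ.filter fun g => (g : ℕ) % n = n - 1 ∨ (g : ℕ) + 1 = m

def firstGood (m : ℕ) : Finset (Fin m) :=
  univ.filter fun g => (g : ℕ) = 0

def firstOrBlockEnds (n m : ℕ) (S : Finset (Fin m)) : ℝ :=
  max (countVal (firstGood m) S) (countVal (blockEnds n m) S)

def indifferentProfile (hn : 0 < n) (v₀ : Finset (Fin m) → ℝ) : Fin n → Finset (Fin m) → ℝ :=
  Function.update (fun _ => countVal ∅) ⟨0, hn⟩ v₀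

theorem indifferentProfile_zero (hn : 0 < n) (v₀ : Finset (Fin m) → ℝ) :
    indifferentProfile hn v₀ ⟨0, hn⟩ = v₀ :=
  Function.update_self _ _ _

theorem marginal_indifferentProfile_of_ne (hn : 0 < n) (v₀ : Finset (Fin m) → ℝ) {i : Fin n}
    (hi : i ≠ ⟨0, hn⟩) (A : Finset (Fin m)) (g : Fin m) :
    marginal (indifferentProfile hn v₀ i) A g = 0 := by
  simp [indifferentProfile, Function.update_of_ne hi, marginal, countVal_apply]

theorem update_indifferentProfile (hn : 0 < n) (v₀ v₁ : Finset (Fin m) → ℝ) :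
    Function.update (indifferentProfile hn v₀) ⟨0, hn⟩ v₁ = indifferentProfile hn v₁ :=
  Function.update_idem _ _ _

theorem mem_blockEnds_iff_of_mod_eq_zero (hn : 2 ≤ n) {g : Fin m} (hg : (g : ℕ) % n = 0) :
    g ∈ blockEnds n m ↔ (g : ℕ) + 1 = m := by
  simp only [blockEnds, mem_filter, mem_univ, true_and]
  omega

theorem firstOrBlockEnds_le_one {S : Finset (Fin m)} (hS : #(S ∩ blockEnds n m) ≤ 1) :
    firstOrBlockEnds n m S ≤ 1 := by
  have h₀ : #(S ∩ firstGood m) ≤ 1 := card_le_one.mpr fun a ha b hb => by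
    simp only [firstGood, mem_inter, mem_filter] at ha hb
    exact Fin.ext (ha.2.2.trans hb.2.2.symm)
  simp only [firstOrBlockEnds, countVal_apply]
  exact max_le (by exact_mod_cast h₀) (by exact_mod_cast hS)

theorem firstOrBlockEnds_eq_one {S : Finset (Fin m)} {g₀ : Fin m} (hg₀ : (g₀ : ℕ) = 0)
    (h₀ : g₀ ∈ S) (hS : #(S ∩ blockEnds n m) ≤ 1) : firstOrBlockEnds n m S = 1 := by
  refine le_antisymm (firstOrBlockEnds_le_one hS) (le_max_of_le_left ?_)
  rw [countVal_apply, Nat.one_le_cast, Nat.one_le_iff_ne_zero, Ne, card_eq_zero,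
    ← not_nonempty_iff_eq_empty, not_not]
  exact ⟨g₀, mem_inter.mpr ⟨h₀, by simp [firstGood, hg₀]⟩⟩

theorem marginal_firstOrBlockEnds_le {A : Finset (Fin m)} {g g' g₀ : Fin m}
    (hA : Disjoint A (blockEnds n m)) (hg₀ : (g₀ : ℕ) = 0) (h₀ : g₀ ∈ insert g A) :
    marginal (firstOrBlockEnds n m) A g' ≤ marginal (firstOrBlockEnds n m) A g := by
  have hins : ∀ x, #(insert x A ∩ blockEnds n m) ≤ 1 := fun x => by
    rw [inter_insert, disjoint_iff_inter_eq_empty.mp hA]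
    split_ifs <;> simp
  rw [marginal, marginal, firstOrBlockEnds_eq_one hg₀ h₀ (hins g)]
  linarith [firstOrBlockEnds_le_one (hins g')]

theorem roundRobin2_firstOrBlockEnds (hn : 2 ≤ n) :
    roundRobin2 (indifferentProfile (n := n) (by omega) (firstOrBlockEnds n m)) ⟨0, by omega⟩ =
      univ.filter fun g : Fin m => (g : ℕ) % n = 0 := by
  rw [roundRobin2_eq_of_isFavorite (by omega) (σ := id) Function.injective_id ?_]
  · rfl
  intro g
  dsimp only [id]
  refine isFavorite_of_isLeast ⟨by simp [scheduledPool], fun g' hg' => by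
    simpa [scheduledPool] using hg'⟩ fun g' _ => ?_
  by_cases hg : (g : ℕ) % n = 0
  · have hi : (⟨(g : ℕ) % n, Nat.mod_lt _ (by omega)⟩ : Fin n) = ⟨0, by omega⟩ := Fin.ext hg
    rw [hi, indifferentProfile_zero]
    refine marginal_firstOrBlockEnds_le (g₀ := ⟨0, g.pos⟩)
      (disjoint_left.mpr fun t ht htb => ?_) rfl ?_
    · simp only [scheduledBundle, hg, id, mem_filter, mem_univ, true_and] at ht
      rw [mem_blockEnds_iff_of_mod_eq_zero hn ht.2] at htb
      omega
    · rcases Nat.eq_zero_or_pos g with h | h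
      · exact mem_insert.mpr (Or.inl (Fin.ext h.symm))
      · exact mem_insert_of_mem (mem_filter.mpr ⟨mem_univ _, h, (Nat.zero_mod n).trans hg.symm⟩)
  · have hi : (⟨(g : ℕ) % n, Nat.mod_lt _ (by omega)⟩ : Fin n) ≠ ⟨0, by omega⟩ :=
      fun h => hg (Fin.ext_iff.mp h)
    rw [marginal_indifferentProfile_of_ne _ _ hi, marginal_indifferentProfile_of_ne _ _ hi]

/-- The stages of the misreport run: a block end is taken at the first stage of its block, any
other good one stage after its own index. -/
def blockEndFirst (n m : ℕ) (g : Fin m) : Fin m :=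
  if h : g ∈ blockEnds n m then ⟨g - g % n, by omega⟩
  else ⟨g + 1, by simp only [blockEnds, mem_filter, mem_univ, true_and] at h; omega⟩

theorem blockEndFirst_le_succ (g : Fin m) : (blockEndFirst n m g : ℕ) ≤ g + 1 := by
  unfold blockEndFirst
  split_ifs <;> simp only <;> omega

theorem blockEndFirst_mod_eq_zero_iff (hn : 0 < n) {g : Fin m} :
    (blockEndFirst n m g : ℕ) % n = 0 ↔ g ∈ blockEnds n m := by
  unfold blockEndFirst
  split_ifs with h
  · simpa [h] using Nat.sub_mod_eq_zero_of_mod_eq (Nat.mod_mod g n).symm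
  · simp only [blockEnds, mem_filter, mem_univ, true_and, not_or] at h
    obtain ⟨b, rfl⟩ := Nat.exists_eq_add_one_of_ne_zero hn.ne'
    simp only [Nat.succ_mod_succ_eq_zero_iff, blockEnds, mem_filter, mem_univ, true_and]
    omega

theorem le_of_blockEndFirst_le (hn : 0 < n) {g g' : Fin m} (hg : g ∈ blockEnds n m)
    (hg' : g' ∈ blockEnds n m) (h : blockEndFirst n m g ≤ blockEndFirst n m g') : g ≤ g' := by
  simp only [blockEndFirst, hg, hg', dif_pos, Fin.le_def] at h ⊢
  simp only [blockEnds, mem_filter, mem_univ, true_and] at hg hg'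
  have := Nat.mod_lt g hn
  have := Nat.mod_lt g' hn
  have := Nat.mod_le g n
  have := Nat.mod_le g' n
  omega

theorem blockEndFirst_injective (hn : 0 < n) : Function.Injective (blockEndFirst n m) := by
  intro g g' h
  have hmem : g ∈ blockEnds n m ↔ g' ∈ blockEnds n m := by
    rw [← blockEndFirst_mod_eq_zero_iff hn, h, blockEndFirst_mod_eq_zero_iff hn]
  by_cases hg : g ∈ blockEnds n m
  · exact le_antisymm (le_of_blockEndFirst_le hn hg (hmem.mp hg) h.le)
      (le_of_blockEndFirst_le hn (hmem.mp hg) hg h.ge)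
  · simp only [blockEndFirst, hg, hmem.not.mp hg, dif_neg, not_false_eq_true, Fin.mk.injEq] at h
    exact Fin.ext (by omega)

theorem Fin.card_filter_val_mod_eq_zero (hn : 0 < n) :
    #(univ.filter fun s : Fin m => (s : ℕ) % n = 0) = (m + n - 1) / n := by
  rw [← Nat.Ioc_filter_dvd_card_eq_div]
  refine card_bij (fun s _ => (s : ℕ) + n) (fun s hs => ?_) (fun s _ t _ h => Fin.ext (by omega))
    fun x hx => ?_
  · simp only [mem_filter, mem_univ, true_and, mem_Ioc] at hs ⊢
    exact ⟨⟨by omega, by omega⟩, Nat.dvd_add_self_right.mpr (Nat.dvd_of_mod_eq_zero hs)⟩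
  · simp only [mem_filter, mem_Ioc] at hx
    obtain ⟨⟨hx0, hxm⟩, hdvd⟩ := hx
    have hnx : n ≤ x := Nat.le_of_dvd hx0 hdvd
    refine ⟨⟨x - n, by omega⟩, ?_, by simp; omega⟩
    simpa using Nat.mod_eq_zero_of_dvd (Nat.dvd_sub hdvd dvd_rfl)

theorem card_blockEnds (hn : 0 < n) : #(blockEnds n m) = (m + n - 1) / n := by
  rw [← Fin.card_filter_val_mod_eq_zero hn]
  exact card_equiv (Equiv.ofBijective _ (Finite.injective_iff_bijective.mp
    (blockEndFirst_injective hn))) fun g => by simp [blockEndFirst_mod_eq_zero_iff hn]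

theorem roundRobin2_countVal_blockEnds (hn : 2 ≤ n) :
    roundRobin2 (indifferentProfile (n := n) (by omega) (countVal (blockEnds n m))) ⟨0, by omega⟩ =
      blockEnds n m := by
  have hn₀ : 0 < n := by omega
  rw [roundRobin2_eq_of_isFavorite hn₀ (blockEndFirst_injective hn₀) ?_]
  · ext g
    simp [blockEndFirst_mod_eq_zero_iff hn₀]
  intro g
  have hpool : ∀ g' ∈ scheduledPool (blockEndFirst n m) (blockEndFirst n m g),
      (blockEndFirst n m g : ℕ) ≤ blockEndFirst n m g' := fun g' hg' => (mem_filter.mp hg').2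
  by_cases hg : g ∈ blockEnds n m
  · have hi : (⟨(blockEndFirst n m g : ℕ) % n, Nat.mod_lt _ (by omega)⟩ : Fin n) = ⟨0, by omega⟩ :=
      Fin.ext ((blockEndFirst_mod_eq_zero_iff hn₀).mpr hg)
    rw [hi, indifferentProfile_zero]
    have hA := disjoint_right.mp (disjoint_scheduledBundle_scheduledPool (n := n)
      (blockEndFirst n m) (blockEndFirst n m g) (blockEndFirst n m g % n))
    have hself : g ∈ scheduledPool (blockEndFirst n m) (blockEndFirst n m g) := by
      simp [scheduledPool]
    refine ⟨hself, fun g' hg' => ?_⟩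
    rw [marginal_countVal _ (hA hg'), marginal_countVal _ (hA hself), if_pos hg]
    split_ifs with hg''
    · exact ⟨le_rfl, fun _ => le_of_blockEndFirst_le hn₀ hg hg'' (hpool g' hg')⟩
    · norm_num
  · have hi : (⟨(blockEndFirst n m g : ℕ) % n, Nat.mod_lt _ (by omega)⟩ : Fin n) ≠ ⟨0, by omega⟩ :=
      fun h => hg ((blockEndFirst_mod_eq_zero_iff hn₀).mp (Fin.ext_iff.mp h))
    refine isFavorite_of_isLeast ⟨by simp [scheduledPool], fun g' hg' => ?_⟩ fun g' _ => ?_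
    · have hσg : (blockEndFirst n m g : ℕ) = g + 1 := by simp [blockEndFirst, hg]
      have := hpool g' hg'
      have := blockEndFirst_le_succ (n := n) g'
      exact Fin.le_def.mpr (by omega)
    · rw [marginal_indifferentProfile_of_ne _ _ hi, marginal_indifferentProfile_of_ne _ _ hi]

theorem firstOrBlockEnds_filter_mod_eq_zero (hn : 2 ≤ n) (hm : 0 < m) :
    firstOrBlockEnds n m (univ.filter fun g : Fin m => (g : ℕ) % n = 0) = 1 := by
  refine firstOrBlockEnds_eq_one (g₀ := ⟨0, hm⟩) rfl (by simp) (card_le_one.mpr fun a ha b hb => ?_)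
  simp only [mem_inter, mem_filter, mem_univ, true_and] at ha hb
  rw [mem_blockEnds_iff_of_mod_eq_zero hn ha.1] at ha
  rw [mem_blockEnds_iff_of_mod_eq_zero hn hb.1] at hb
  exact Fin.ext (by omega)

theorem firstOrBlockEnds_blockEnds (hn : 2 ≤ n) (hm : 2 ≤ m) :
    firstOrBlockEnds n m (blockEnds n m) = ((m + n - 1) / n : ℕ) := by
  have hdisj : blockEnds n m ∩ firstGood m = ∅ := by
    ext g
    simp only [blockEnds, firstGood, mem_inter, mem_filter, mem_univ, true_and, notMem_empty,
      iff_false]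
    rintro ⟨hg, hg0⟩
    rw [hg0, Nat.zero_mod] at hg
    omega
  rw [firstOrBlockEnds, countVal_apply, countVal_apply, hdisj, inter_self,
    card_blockEnds (by omega), card_empty, Nat.cast_zero]
  exact max_eq_right (Nat.cast_nonneg _)

end Construction

/-- Lower bound of ⌈m/n⌉ on the incentive ratio of Mechanism 2 for XOS valuations:
for all n ≥ 2 and m ≥ n there is an XOS profile and an additive misreport for agent 1
such that agent 1's truthful utility is 1 while his utility after misreporting is
⌈m/n⌉. -/
theorem roundRobin2_xos_lower_bound {n m : ℕ} (hn : 2 ≤ n) (hm : n ≤ m) :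
    ∃ (v : Fin n → Finset (Fin m) → ℝ) (v1' : Finset (Fin m) → ℝ),
      (∀ j, IsValuation (v j) ∧ XOSVal (v j)) ∧
      IsValuation v1' ∧ AdditiveVal v1' ∧
      v ⟨0, by omega⟩ (roundRobin2 v ⟨0, by omega⟩) = 1 ∧
      v ⟨0, by omega⟩
          (roundRobin2 (Function.update v ⟨0, by omega⟩ v1') ⟨0, by omega⟩) =
        (((m + n - 1) / n : ℕ) : ℝ) := by
  have hn₀ : 0 < n := by omega
  refine ⟨indifferentProfile hn₀ (firstOrBlockEnds n m), countVal (blockEnds n m), fun j => ?_,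
    isValuation_countVal _, addVal_additive _, ?_, ?_⟩
  · rcases eq_or_ne j ⟨0, hn₀⟩ with rfl | hj
    · rw [indifferentProfile_zero]
      exact ⟨(isValuation_countVal _).max (isValuation_countVal _),
        xosVal_max (addVal_additive _) (addVal_additive _)⟩
    · rw [indifferentProfile, Function.update_of_ne hj]
      exact ⟨isValuation_countVal _, xosVal_of_additive (addVal_additive _)⟩
  · rw [roundRobin2_firstOrBlockEnds hn, indifferentProfile_zero]
    exact firstOrBlockEnds_filter_mod_eq_zero hn (by omega)
  · rw [update_indifferentProfile, roundRobin2_countVal_blockEnds hn, indifferentProfile_zero]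
    exact firstOrBlockEnds_blockEnds hn (by omega)
end
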